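/- arXiv:1807.07457 — 7 statements merged into one kernel-verified Lean document; each statement's English description precedes it below -/
import Mathlib

section
/- Let λ be a partition of n and u, t standard λ-tableaux. If t > u in the Bruhat order (transferred via perm), then t >_lex u, i.e., there exists l ∈ [1,n] with col_t(l) < col_u(l) and col_t(i) = col_u(i) for all i > l. -/
/-- Partial sum `λ₁ + ⋯ + λ_k` of a 1-indexed sequence of parts. -/
def psum (lam : ℕ → ℕ) (k : ℕ) : ℕ := ∑ i ∈ Finset.Icc 1 k, lam i

/-- `lam` is a composition of `n` (1-indexed parts, extended by zeros). -/
def IsComp (n : ℕ) (lam : ℕ → ℕ) : Prop :=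
  lam 0 = 0 ∧ ∃ N, (∀ i, N < i → lam i = 0) ∧ psum lam N = n

/-- `lam` is a partition of `n` (weakly decreasing parts). -/
def IsPartition (n : ℕ) (lam : ℕ → ℕ) : Prop :=
  IsComp n lam ∧ ∀ i j, 1 ≤ i → i ≤ j → lam j ≤ lam i

/-- Dominance order in the paper's (column) convention: `lam` dominates `mu`
(written `mu ≤ lam`) iff every partial sum of `lam` is at most the
corresponding partial sum of `mu`. -/
def Dominates (lam mu : ℕ → ℕ) : Prop := ∀ k, psum lam k ≤ psum mu k

/-- Row index of the box containing the entry `k`. -/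
def rowT (p : ℕ → ℕ × ℕ) (k : ℕ) : ℕ := (p k).1
/-- Column index of the box containing the entry `k`. -/
def colT (p : ℕ → ℕ × ℕ) (k : ℕ) : ℕ := (p k).2

/-- `p` is the position function of a bijective filling of the skew diagram
`[lam] ∖ [mu]` (1-indexed rows and columns, `lam j` boxes in column `j`)
by the entries `a+1, …, a+n`. -/
def IsSkewTab (lam mu : ℕ → ℕ) (a n : ℕ) (p : ℕ → ℕ × ℕ) : Prop :=
  (∀ k ∈ Finset.Icc (a+1) (a+n),
      1 ≤ (p k).2 ∧ mu (p k).2 < (p k).1 ∧ (p k).1 ≤ lam (p k).2) ∧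
  (∀ k ∈ Finset.Icc (a+1) (a+n), ∀ l ∈ Finset.Icc (a+1) (a+n), p k = p l → k = l) ∧
  (∀ c : ℕ × ℕ, 1 ≤ c.2 → mu c.2 < c.1 → c.1 ≤ lam c.2 →
      ∃ k ∈ Finset.Icc (a+1) (a+n), p k = c)

/-- A straight-shape `lam`-tableau with entries `1, …, n`. -/
def IsTab (lam : ℕ → ℕ) (n : ℕ) (p : ℕ → ℕ × ℕ) : Prop :=
  IsSkewTab lam (fun _ => 0) 0 n p

/-- Entries increase down each column. -/
def ColStd (a n : ℕ) (p : ℕ → ℕ × ℕ) : Prop :=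
  ∀ k ∈ Finset.Icc (a+1) (a+n), ∀ l ∈ Finset.Icc (a+1) (a+n),
    colT p k = colT p l → rowT p k < rowT p l → k < l

/-- Entries increase along each row. -/
def RowStd (a n : ℕ) (p : ℕ → ℕ × ℕ) : Prop :=
  ∀ k ∈ Finset.Icc (a+1) (a+n), ∀ l ∈ Finset.Icc (a+1) (a+n),
    rowT p k = rowT p l → colT p k < colT p l → k < l

/-- Standard skew tableau of shape `lam/mu` with entries `a+1, …, a+n`. -/
def IsStdSkew (lam mu : ℕ → ℕ) (a n : ℕ) (p : ℕ → ℕ × ℕ) : Prop :=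
  IsSkewTab lam mu a n p ∧ ColStd a n p ∧ RowStd a n p

/-- Standard `lam`-tableau with entries `1, …, n`. -/
def IsStd (lam : ℕ → ℕ) (n : ℕ) (p : ℕ → ℕ × ℕ) : Prop :=
  IsStdSkew lam (fun _ => 0) 0 n p

/-- Column standard straight-shape `lam`-tableau. -/
def IsColStdTab (lam : ℕ → ℕ) (n : ℕ) (p : ℕ → ℕ × ℕ) : Prop :=
  IsTab lam n p ∧ ColStd 0 n p

/-- `i ∈ D(p)`: a descent, `col(i) ≥ col(i+1)`. -/
def inD (a n : ℕ) (p : ℕ → ℕ × ℕ) (i : ℕ) : Prop :=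
  a + 1 ≤ i ∧ i + 1 ≤ a + n ∧ colT p (i+1) ≤ colT p i
/-- `i ∈ SD(p)`: a strong descent, `col(i) > col(i+1)`. -/
def inSD (a n : ℕ) (p : ℕ → ℕ × ℕ) (i : ℕ) : Prop :=
  a + 1 ≤ i ∧ i + 1 ≤ a + n ∧ colT p (i+1) < colT p i
/-- `i ∈ WD(p)`: a weak descent, `col(i) = col(i+1)`. -/
def inWD (a n : ℕ) (p : ℕ → ℕ × ℕ) (i : ℕ) : Prop :=
  a + 1 ≤ i ∧ i + 1 ≤ a + n ∧ colT p (i+1) = colT p i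
/-- `i ∈ A(p)`: an ascent, `col(i) < col(i+1)`. -/
def inA (a n : ℕ) (p : ℕ → ℕ × ℕ) (i : ℕ) : Prop :=
  a + 1 ≤ i ∧ i + 1 ≤ a + n ∧ colT p i < colT p (i+1)
/-- `i ∈ SA(p)`: a strong ascent, `row(i) > row(i+1)`. -/
def inSA (a n : ℕ) (p : ℕ → ℕ × ℕ) (i : ℕ) : Prop :=
  a + 1 ≤ i ∧ i + 1 ≤ a + n ∧ rowT p (i+1) < rowT p i

/-- Descent set of a tableau with entries `1, …, n`. -/
def Dset (n : ℕ) (p : ℕ → ℕ × ℕ) : Set ℕ := {i | inD 0 n p i}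

/-- Shape of the restriction of `p` to entries `≤ m`: the number of boxes
of column `j` occupied by entries `≤ m`. -/
def resShape (p : ℕ → ℕ × ℕ) (m j : ℕ) : ℕ :=
  ((Finset.Icc 1 m).filter (fun k => colT p k = j)).card

/-- Extended dominance order on standard tableaux with `n` boxes: `u ≤ t`. -/
def ExtDomLe (n : ℕ) (pu pt : ℕ → ℕ × ℕ) : Prop :=
  ∀ m ∈ Finset.Icc 1 n, Dominates (fun j => resShape pt m j) (fun j => resShape pu m j)

/-- `i` is the restriction number of `(u,t)`: the restrictions to entries `≤ i`
agree, and `i` is maximal with this property. -/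
def RestNum (n : ℕ) (pu pt : ℕ → ℕ × ℕ) (i : ℕ) : Prop :=
  i ≤ n ∧ (∀ k, 1 ≤ k → k ≤ i → pu k = pt k) ∧ (i = n ∨ pu (i+1) ≠ pt (i+1))

/-- `(u,t)` is favourable with restriction number `i`:
`i` lies in the symmetric difference `D(u) ⊕ D(t)`. -/
def Favourable (n : ℕ) (pu pt : ℕ → ℕ × ℕ) (i : ℕ) : Prop :=
  RestNum n pu pt i ∧
    ((inD 0 n pu i ∧ ¬ inD 0 n pt i) ∨ (inD 0 n pt i ∧ ¬ inD 0 n pu i))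

/-- Dual Knuth move of the first kind of index `k` from `u` to `t`,
on standard tableaux of shape `lam`:  `t = s_k u` with
`D(u) ∩ {k-1,k} = {k-1}` and `D(t) ∩ {k-1,k} = {k}`. -/
def DK1 (lam : ℕ → ℕ) (n : ℕ) (pu pt : ℕ → ℕ × ℕ) (k : ℕ) : Prop :=
  IsStd lam n pu ∧ IsStd lam n pt ∧ 2 ≤ k ∧
  (∀ m, pt m = pu (Equiv.swap k (k+1) m)) ∧
  inD 0 n pu (k-1) ∧ ¬ inD 0 n pu k ∧ inD 0 n pt k ∧ ¬ inD 0 n pt (k-1)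

/-- Dual Knuth move of the second kind of index `k` from `u` to `t`:
`t = s_k u` with `D(u) ∩ {k,k+1} = {k+1}` and `D(t) ∩ {k,k+1} = {k}`. -/
def DK2 (lam : ℕ → ℕ) (n : ℕ) (pu pt : ℕ → ℕ × ℕ) (k : ℕ) : Prop :=
  IsStd lam n pu ∧ IsStd lam n pt ∧ k + 2 ≤ n ∧
  (∀ m, pt m = pu (Equiv.swap k (k+1) m)) ∧
  inD 0 n pu (k+1) ∧ ¬ inD 0 n pu k ∧ inD 0 n pt k ∧ ¬ inD 0 n pt (k+1)

/-- A dual Knuth move (of either kind) of index `k` from `u` to `t`. -/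
def DKMove (lam : ℕ → ℕ) (n : ℕ) (pu pt : ℕ → ℕ × ℕ) (k : ℕ) : Prop :=
  DK1 lam n pu pt k ∨ DK2 lam n pu pt k

/-- A paired dual Knuth move: a dual Knuth move of the same kind and the same
index applied simultaneously to both components of a pair. -/
def PairedDKMove (mu lam : ℕ → ℕ) (n : ℕ)
    (a b : (ℕ → ℕ × ℕ) × (ℕ → ℕ × ℕ)) : Prop :=
  ∃ k, (DK1 mu n a.1 b.1 k ∧ DK1 lam n a.2 b.2 k) ∨
       (DK2 mu n a.1 b.1 k ∧ DK2 lam n a.2 b.2 k)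

/-- Paired dual Knuth equivalence: the equivalence relation generated by
paired dual Knuth moves. -/
def PairedDKEquiv (mu lam : ℕ → ℕ) (n : ℕ)
    (a b : (ℕ → ℕ × ℕ) × (ℕ → ℕ × ℕ)) : Prop :=
  Relation.ReflTransGen
    (fun x y => PairedDKMove mu lam n x y ∨ PairedDKMove mu lam n y x) a b

/-- Lexicographic order on same-shape column standard tableaux: `u <_lex t`. -/
def LexLT (n : ℕ) (pu pt : ℕ → ℕ × ℕ) : Prop :=
  ∃ l, 1 ≤ l ∧ l ≤ n ∧ colT pt l < colT pu l ∧
    ∀ m, l < m → m ≤ n → colT pt m = colT pu m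

/-- `w` is a permutation of `[1,n]`, fixing all other natural numbers. -/
def IsPermOf (n : ℕ) (w : ℕ → ℕ) : Prop :=
  (∀ k ∈ Finset.Icc 1 n, w k ∈ Finset.Icc 1 n) ∧
  (∀ k ∈ Finset.Icc 1 n, ∀ l ∈ Finset.Icc 1 n, w k = w l → k = l) ∧
  (∀ k, k ∉ Finset.Icc 1 n → w k = k)

/-- The Coxeter length of `w ∈ S_n`: the number of inversions. -/
def lenInv (n : ℕ) (w : ℕ → ℕ) : ℕ :=
  ((Finset.Icc 1 n ×ˢ Finset.Icc 1 n).filter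
    (fun q => q.1 < q.2 ∧ w q.2 < w q.1)).card

/-- One step of the Bruhat order on `S_n`: `y = (i j) ∘ x` (so `y x⁻¹` is a
reflection) with `l(x) < l(y)`. -/
def BruhatStep (n : ℕ) (x y : ℕ → ℕ) : Prop :=
  lenInv n x < lenInv n y ∧
  ∃ i j, 1 ≤ i ∧ i < j ∧ j ≤ n ∧ ∀ k, y k = Equiv.swap i j (x k)

/-- The Bruhat order on `S_n`. -/
def BruhatLe (n : ℕ) (x y : ℕ → ℕ) : Prop :=
  Relation.ReflTransGen (BruhatStep n) x y

/-- One step of the left weak order on `S_n`: `y = s_i ∘ x` with `l(x) < l(y)`. -/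
def WeakStep (n : ℕ) (x y : ℕ → ℕ) : Prop :=
  lenInv n x < lenInv n y ∧
  ∃ i, 1 ≤ i ∧ i + 1 ≤ n ∧ ∀ k, y k = Equiv.swap i (i+1) (x k)

/-- The left weak order on `S_n`. -/
def WeakLe (n : ℕ) (x y : ℕ → ℕ) : Prop :=
  Relation.ReflTransGen (WeakStep n) x y

/-- `ptau` is (the position function of) the column superstandard tableau
`τ_lam`: column standard, with the columns filled in order from left to right. -/
def IsSuperstandard (lam : ℕ → ℕ) (n : ℕ) (ptau : ℕ → ℕ × ℕ) : Prop :=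
  IsTab lam n ptau ∧ ColStd 0 n ptau ∧
  ∀ k, 1 ≤ k → k + 1 ≤ n → colT ptau k ≤ colT ptau (k+1)

/-- `w = perm(t)`, i.e. `w · τ_lam = t`: for each `k`, the box of `τ_lam`
containing `k` contains `w k` in `t`. -/
def IsPermTab (n : ℕ) (ptau pt : ℕ → ℕ × ℕ) (w : ℕ → ℕ) : Prop :=
  IsPermOf n w ∧ ∀ k ∈ Finset.Icc 1 n, pt (w k) = ptau k

/-- `p` (a standard skew tableau of shape `lam/mu` with entries `a+1, …, a+n`)
is the `(a+1)`-critical tableau: writing `m = a+1`, the entry `m` lies in the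
first nonempty column `i` of the skew diagram, `m+1` lies in column `i+1`,
and the restriction to entries `> m+1` is minimal (no strong descents). -/
def IsCritical (lam mu : ℕ → ℕ) (a n : ℕ) (p : ℕ → ℕ × ℕ) : Prop :=
  IsStdSkew lam mu a n p ∧
  (∀ j, 1 ≤ j → j < colT p (a+1) → lam j ≤ mu j) ∧
  mu (colT p (a+1)) < lam (colT p (a+1)) ∧
  colT p (a+2) = colT p (a+1) + 1 ∧
  ∀ i, a + 3 ≤ i → i + 1 ≤ a + n → colT p i ≤ colT p (i+1)

/-- The box `c` is removable from the diagram of `lam`. -/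
def Removable (lam : ℕ → ℕ) (c : ℕ × ℕ) : Prop :=
  1 ≤ c.2 ∧ c.1 = lam c.2 ∧ lam (c.2 + 1) < c.1

/-- One step of a jeu de taquin slide on a filling `p` with entries `1, …, n`:
the hole moves from `b` to `b'`, where `b'` is the box (below or to the right
of `b`) containing the smaller entry `x` among the occupied candidates, and the
filling is updated by moving `x` into `b`. -/
def SlideStep (n : ℕ) (p : ℕ → ℕ × ℕ) (b : ℕ × ℕ)
    (p' : ℕ → ℕ × ℕ) (b' : ℕ × ℕ) : Prop :=
  ∃ x, 1 ≤ x ∧ x ≤ n ∧ p x = b' ∧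
    (b' = (b.1 + 1, b.2) ∨ b' = (b.1, b.2 + 1)) ∧
    (∀ y, 1 ≤ y → y ≤ n → (p y = (b.1 + 1, b.2) ∨ p y = (b.1, b.2 + 1)) → x ≤ y) ∧
    (∀ y, p' y = if y = x then b else p y)

/-- `lam/mu` is a skew partition of `n`. -/
def IsSkewShape (n : ℕ) (lam mu : ℕ → ℕ) : Prop :=
  (∃ m, IsPartition (m + n) lam ∧ IsPartition m mu) ∧ ∀ j, mu j ≤ lam j

namespace Stmt9Aux

lemma swap_mem {n a b : ℕ} (ha : a ∈ Finset.Icc 1 n) (hb : b ∈ Finset.Icc 1 n)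
    {c : ℕ} (hc : c ∈ Finset.Icc 1 n) : Equiv.swap a b c ∈ Finset.Icc 1 n := by
  rcases eq_or_ne c a with rfl | h1
  · simpa using hb
  rcases eq_or_ne c b with rfl | h2
  · simpa using ha
  · rwa [Equiv.swap_apply_of_ne_of_ne h1 h2]

lemma lenC {n : ℕ} {x y : ℕ → ℕ} {a b : ℕ}
    (ha : a ∈ Finset.Icc 1 n) (hb : b ∈ Finset.Icc 1 n) (hab : a < b)
    (hxab : x a < x b)
    (hy : ∀ k, y k = x (Equiv.swap a b k)) : lenInv n x < lenInv n y := by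
  classical
  have hyx : ∀ k, y (Equiv.swap a b k) = x k := by
    intro k; rw [hy]; simp
  have hya : y a = x b := by rw [hy]; simp
  have hyb : y b = x a := by rw [hy]; simp
  have hyo : ∀ c, c ≠ a → c ≠ b → y c = x c := by
    intro c h1 h2; rw [hy, Equiv.swap_apply_of_ne_of_ne h1 h2]
  set G := Finset.Icc 1 n ×ˢ Finset.Icc 1 n with hG
  set Sx := G.filter (fun q => q.1 < q.2 ∧ x q.2 < x q.1) with hSx
  set Sy := G.filter (fun q => q.1 < q.2 ∧ y q.2 < y q.1) with hSy
  have hlx : lenInv n x = Sx.card := rfl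
  have hly : lenInv n y = Sy.card := rfl
  have habmem : (a, b) ∈ Sy := by
    simp only [hSy, Finset.mem_filter, hG, Finset.mem_product]
    exact ⟨⟨ha, hb⟩, hab, by rw [hya, hyb]; exact hxab⟩
  set f : ℕ × ℕ → ℕ × ℕ := fun z =>
    if (z.1 = a ∧ z.2 < b) ∨ (z.2 = b ∧ a < z.1) then z
    else (Equiv.swap a b z.1, Equiv.swap a b z.2) with hf
  have hmaps : ∀ z ∈ Sx, f z ∈ Sy.erase (a, b) := by
    rintro ⟨p, q⟩ hz
    simp only [hSx, Finset.mem_filter, hG, Finset.mem_product] at hz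
    obtain ⟨⟨hp, hq⟩, hpq, hinv⟩ := hz
    simp only [Finset.mem_erase, hSy, Finset.mem_filter, hG, Finset.mem_product]
    by_cases hm : ((p, q).1 = a ∧ (p, q).2 < b) ∨ ((p, q).2 = b ∧ a < (p, q).1)
    · have hfz : f (p, q) = (p, q) := if_pos hm
      rw [hfz]
      rcases hm with ⟨hpa, hqb⟩ | ⟨hqb, hap⟩
      · simp only at hpa hqb
        have hq1 : q ≠ a := by omega
        have hq2 : q ≠ b := by omega
        refine ⟨?_, ⟨hp, hq⟩, hpq, ?_⟩
        · intro h; exact hq2 (congrArg Prod.snd h)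
        · rw [hpa] at hinv ⊢
          rw [hya, hyo q hq1 hq2]; omega
      · simp only at hqb hap
        have hp1 : p ≠ a := by omega
        have hp2 : p ≠ b := by omega
        refine ⟨?_, ⟨hp, hq⟩, hpq, ?_⟩
        · intro h; exact hp1 (congrArg Prod.fst h)
        · rw [hqb] at hinv ⊢
          rw [hyb, hyo p hp1 hp2]; omega
    · have hfz : f (p, q) = (Equiv.swap a b p, Equiv.swap a b q) := if_neg hm
      rw [hfz]
      push_neg at hm
      obtain ⟨hm1, hm2⟩ := hm
      simp only at hm1 hm2
      have hinvy : y (Equiv.swap a b q) < y (Equiv.swap a b p) := by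
        rw [hyx, hyx]; exact hinv
      have hmemp := swap_mem ha hb hp
      have hmemq := swap_mem ha hb hq
      have hne : (Equiv.swap a b p, Equiv.swap a b q) ≠ (a, b) := by
        intro h
        have h1 : Equiv.swap a b p = Equiv.swap a b b :=
          (congrArg Prod.fst h).trans (Equiv.swap_apply_right a b).symm
        have h2 : Equiv.swap a b q = Equiv.swap a b a :=
          (congrArg Prod.snd h).trans (Equiv.swap_apply_left a b).symm
        have hpb := (Equiv.swap a b).injective h1
        have hqa := (Equiv.swap a b).injective h2
        omega
      refine ⟨hne, ⟨hmemp, hmemq⟩, ?_, hinvy⟩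
      rcases eq_or_ne p a with hpa | hpa
      · have hbq : b ≤ q := hm1 hpa
        have hqb : q ≠ b := by
          intro h; rw [h, hpa] at hinv; omega
        have hqa : q ≠ a := by omega
        rw [hpa, Equiv.swap_apply_left, Equiv.swap_apply_of_ne_of_ne hqa hqb]
        omega
      · rcases eq_or_ne q b with hqb | hqb
        · have hpa' : p ≤ a := hm2 hqb
          have hpb : p ≠ b := by omega
          rw [hqb, Equiv.swap_apply_right, Equiv.swap_apply_of_ne_of_ne hpa hpb]
          omega
        · rcases eq_or_ne p b with hpb | hpb
          · have hqa : q ≠ a := by omega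
            rw [hpb, Equiv.swap_apply_right, Equiv.swap_apply_of_ne_of_ne hqa hqb]
            omega
          · rcases eq_or_ne q a with hqa | hqa
            · rw [hqa, Equiv.swap_apply_left, Equiv.swap_apply_of_ne_of_ne hpa hpb]
              omega
            · rw [Equiv.swap_apply_of_ne_of_ne hpa hpb,
                Equiv.swap_apply_of_ne_of_ne hqa hqb]
              omega
  have key : ∀ z1 ∈ Sx, ∀ z2 ∈ Sx,
      ((z1.1 = a ∧ z1.2 < b) ∨ (z1.2 = b ∧ a < z1.1)) →
      ¬((z2.1 = a ∧ z2.2 < b) ∨ (z2.2 = b ∧ a < z2.1)) →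
      f z1 ≠ f z2 := by
    rintro ⟨p1, q1⟩ hz1 ⟨p2, q2⟩ hz2 hm1 hm2 heq
    simp only [hSx, Finset.mem_filter, hG, Finset.mem_product] at hz1 hz2
    obtain ⟨⟨hP1, hQ1⟩, hlt1, hi1⟩ := hz1
    obtain ⟨⟨hP2, hQ2⟩, hlt2, hi2⟩ := hz2
    have hfz1 : f (p1, q1) = (p1, q1) := if_pos hm1
    have hfz2 : f (p2, q2) = (Equiv.swap a b p2, Equiv.swap a b q2) := if_neg hm2
    rw [hfz1, hfz2] at heq
    have e1 : p1 = Equiv.swap a b p2 := congrArg Prod.fst heq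
    have e2 : q1 = Equiv.swap a b q2 := congrArg Prod.snd heq
    rcases hm1 with ⟨hpa, hqb⟩ | ⟨hqb, hap⟩
    · simp only at hpa hqb hlt1 hlt2
      have hp2 : p2 = b := by
        apply (Equiv.swap a b).injective
        rw [Equiv.swap_apply_right, ← e1, hpa]
      have hq1a : q1 ≠ a := by omega
      have hq1b : q1 ≠ b := by omega
      have hq2 : q2 = q1 := by
        apply (Equiv.swap a b).injective
        rw [← e2, Equiv.swap_apply_of_ne_of_ne hq1a hq1b]
      omega
    · simp only at hqb hap hlt1 hlt2
      have hq2 : q2 = a := by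
        apply (Equiv.swap a b).injective
        rw [Equiv.swap_apply_left, ← e2, hqb]
      have hp1a : p1 ≠ a := by omega
      have hp1b : p1 ≠ b := by omega
      have hp2 : p2 = p1 := by
        apply (Equiv.swap a b).injective
        rw [← e1, Equiv.swap_apply_of_ne_of_ne hp1a hp1b]
      omega
  have hinj : Set.InjOn f ↑Sx := by
    intro z1 hz1 z2 hz2 heq
    have hz1' : z1 ∈ Sx := hz1
    have hz2' : z2 ∈ Sx := hz2
    by_cases h1 : (z1.1 = a ∧ z1.2 < b) ∨ (z1.2 = b ∧ a < z1.1) <;>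
      by_cases h2 : (z2.1 = a ∧ z2.2 < b) ∨ (z2.2 = b ∧ a < z2.1)
    · have e1 : f z1 = z1 := if_pos h1
      have e2 : f z2 = z2 := if_pos h2
      rw [e1, e2] at heq; exact heq
    · exact absurd heq (key z1 hz1' z2 hz2' h1 h2)
    · exact absurd heq.symm (key z2 hz2' z1 hz1' h2 h1)
    · have e1 : f z1 = (Equiv.swap a b z1.1, Equiv.swap a b z1.2) := if_neg h1
      have e2 : f z2 = (Equiv.swap a b z2.1, Equiv.swap a b z2.2) := if_neg h2
      rw [e1, e2] at heq
      have c1 := (Equiv.swap a b).injective (congrArg Prod.fst heq)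
      have c2 := (Equiv.swap a b).injective (congrArg Prod.snd heq)
      exact Prod.ext c1 c2
  have h1 : Sx.card ≤ (Sy.erase (a, b)).card :=
    Finset.card_le_card_of_injOn f hmaps hinj
  have h2 : (Sy.erase (a, b)).card < Sy.card :=
    Finset.card_erase_lt_of_mem habmem
  omega

end Stmt9Aux
namespace Stmt9Aux

open Classical in
noncomputable def pInv (n : ℕ) (w : ℕ → ℕ) (l : ℕ) : ℕ :=
  if h : ∃ k, k ∈ Finset.Icc 1 n ∧ w k = l then h.choose else l

lemma perm_surj {n : ℕ} {w : ℕ → ℕ} (hw : IsPermOf n w) {l : ℕ}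
    (hl : l ∈ Finset.Icc 1 n) : ∃ k, k ∈ Finset.Icc 1 n ∧ w k = l := by
  have himg : Finset.image w (Finset.Icc 1 n) = Finset.Icc 1 n := by
    apply Finset.eq_of_subset_of_card_le
    · intro z hz
      obtain ⟨k, hk, rfl⟩ := Finset.mem_image.mp hz
      exact hw.1 k hk
    · rw [Finset.card_image_of_injOn (fun k hk l hl h => hw.2.1 k hk l hl h)]
  rw [← himg] at hl
  obtain ⟨k, hk, hkl⟩ := Finset.mem_image.mp hl
  exact ⟨k, hk, hkl⟩

lemma pInv_spec {n : ℕ} {w : ℕ → ℕ} (hw : IsPermOf n w) {l : ℕ}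
    (hl : l ∈ Finset.Icc 1 n) :
    pInv n w l ∈ Finset.Icc 1 n ∧ w (pInv n w l) = l := by
  have h := perm_surj hw hl
  unfold pInv
  rw [dif_pos h]
  exact h.choose_spec

lemma pInv_left {n : ℕ} {w : ℕ → ℕ} (hw : IsPermOf n w) {k : ℕ}
    (hk : k ∈ Finset.Icc 1 n) : pInv n w (w k) = k := by
  have hwk : w k ∈ Finset.Icc 1 n := hw.1 k hk
  have h := pInv_spec hw hwk
  exact hw.2.1 _ h.1 k hk h.2

end Stmt9Aux
namespace Stmt9Aux

lemma stepDir {n : ℕ} {x y : ℕ → ℕ} {i j a b : ℕ} (hx : IsPermOf n x)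
    (ha : a ∈ Finset.Icc 1 n) (hb : b ∈ Finset.Icc 1 n)
    (hxa : x a = i) (hxb : x b = j)
    (hij : i < j) (hi : 1 ≤ i) (hj : j ≤ n)
    (hy : ∀ k, y k = Equiv.swap i j (x k))
    (hlen : lenInv n x < lenInv n y) : a < b := by
  have hiI : i ∈ Finset.Icc 1 n := Finset.mem_Icc.mpr ⟨hi, by omega⟩
  have hjI : j ∈ Finset.Icc 1 n := Finset.mem_Icc.mpr ⟨by omega, hj⟩
  have hab : a ≠ b := by intro h; rw [h, hxb] at hxa; omega
  have hvalne : ∀ k, k ≠ a → k ≠ b → x k ≠ i ∧ x k ≠ j := by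
    intro k hka hkb
    by_cases hk : k ∈ Finset.Icc 1 n
    · constructor
      · intro h; exact hka (hx.2.1 k hk a ha (h.trans hxa.symm))
      · intro h; exact hkb (hx.2.1 k hk b hb (h.trans hxb.symm))
    · rw [hx.2.2 k hk]
      constructor
      · intro h; rw [h] at hk; exact hk hiI
      · intro h; rw [h] at hk; exact hk hjI
  have hcomp : ∀ k, y k = x (Equiv.swap a b k) := by
    intro k
    rcases eq_or_ne k a with rfl | hka
    · rw [hy, hxa, Equiv.swap_apply_left, Equiv.swap_apply_left, hxb]
    rcases eq_or_ne k b with rfl | hkb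
    · rw [hy, hxb, Equiv.swap_apply_right, Equiv.swap_apply_right, hxa]
    · obtain ⟨h1, h2⟩ := hvalne k hka hkb
      rw [hy, Equiv.swap_apply_of_ne_of_ne h1 h2,
        Equiv.swap_apply_of_ne_of_ne hka hkb]
  rcases lt_or_gt_of_ne hab with h | h
  · exact h
  · -- b < a : contradiction via lenC applied with roles swapped
    exfalso
    have hyb : y b = x a := by
      rw [hcomp, Equiv.swap_apply_right]
    have hya : y a = x b := by
      rw [hcomp, Equiv.swap_apply_left]
    have hxy : ∀ k, x k = y (Equiv.swap b a k) := by
      intro k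
      rw [hcomp, Equiv.swap_comm b a, Equiv.swap_apply_self]
    have := lenC hb ha h (by rw [hyb, hya, hxa, hxb]; exact hij) hxy
    omega

lemma permStep {n : ℕ} {x y : ℕ → ℕ} {i j : ℕ} (hx : IsPermOf n x)
    (hi : 1 ≤ i) (hij : i < j) (hj : j ≤ n)
    (hy : ∀ k, y k = Equiv.swap i j (x k)) : IsPermOf n y := by
  have hiI : i ∈ Finset.Icc 1 n := Finset.mem_Icc.mpr ⟨hi, by omega⟩
  have hjI : j ∈ Finset.Icc 1 n := Finset.mem_Icc.mpr ⟨by omega, hj⟩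
  refine ⟨?_, ?_, ?_⟩
  · intro k hk
    rw [hy]
    exact swap_mem hiI hjI (hx.1 k hk)
  · intro k hk l hl h
    rw [hy, hy] at h
    exact hx.2.1 k hk l hl ((Equiv.swap i j).injective h)
  · intro k hk
    rw [hy, hx.2.2 k hk]
    have h1 : k ≠ i := by intro h; rw [h] at hk; exact hk hiI
    have h2 : k ≠ j := by intro h; rw [h] at hk; exact hk hjI
    exact Equiv.swap_apply_of_ne_of_ne h1 h2

end Stmt9Aux
namespace Stmt9Aux

noncomputable def FCol (n : ℕ) (ptau : ℕ → ℕ × ℕ) (w : ℕ → ℕ) (l : ℕ) : ℕ :=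
  colT ptau (pInv n w l)

def RleP (n : ℕ) (ptau : ℕ → ℕ × ℕ) (x y : ℕ → ℕ) : Prop :=
  (∀ l ∈ Finset.Icc 1 n, FCol n ptau y l = FCol n ptau x l) ∨
  (∃ l, 1 ≤ l ∧ l ≤ n ∧ FCol n ptau y l < FCol n ptau x l ∧
    ∀ m, l < m → m ≤ n → FCol n ptau y m = FCol n ptau x m)

lemma rlep_trans {n : ℕ} {ptau : ℕ → ℕ × ℕ} {x y z : ℕ → ℕ}
    (h1 : RleP n ptau x y) (h2 : RleP n ptau y z) : RleP n ptau x z := by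
  rcases h1 with h1 | ⟨l1, hl11, hl1n, hlt1, htl1⟩
  · rcases h2 with h2 | ⟨l2, hl21, hl2n, hlt2, htl2⟩
    · exact Or.inl (fun l hl => (h2 l hl).trans (h1 l hl))
    · refine Or.inr ⟨l2, hl21, hl2n, ?_, ?_⟩
      · have := h1 l2 (Finset.mem_Icc.mpr ⟨hl21, hl2n⟩)
        omega
      · intro m hm1 hm2
        exact (htl2 m hm1 hm2).trans (h1 m (Finset.mem_Icc.mpr ⟨by omega, hm2⟩))
  · rcases h2 with h2 | ⟨l2, hl21, hl2n, hlt2, htl2⟩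
    · refine Or.inr ⟨l1, hl11, hl1n, ?_, ?_⟩
      · have := h2 l1 (Finset.mem_Icc.mpr ⟨hl11, hl1n⟩)
        omega
      · intro m hm1 hm2
        exact (h2 m (Finset.mem_Icc.mpr ⟨by omega, hm2⟩)).trans (htl1 m hm1 hm2)
    · rcases lt_trichotomy l1 l2 with h | h | h
      · refine Or.inr ⟨l2, hl21, hl2n, ?_, ?_⟩
        · have := htl1 l2 h hl2n
          omega
        · intro m hm1 hm2
          exact (htl2 m hm1 hm2).trans (htl1 m (by omega) hm2)
      · refine Or.inr ⟨l1, hl11, hl1n, ?_, ?_⟩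
        · rw [← h] at hlt2; omega
        · intro m hm1 hm2
          exact (htl2 m (by omega) hm2).trans (htl1 m hm1 hm2)
      · refine Or.inr ⟨l1, hl11, hl1n, ?_, ?_⟩
        · have := htl2 l1 h hl1n
          omega
        · intro m hm1 hm2
          exact (htl2 m (by omega) hm2).trans (htl1 m hm1 hm2)

lemma tauMono {lam : ℕ → ℕ} {n : ℕ} {ptau : ℕ → ℕ × ℕ}
    (htau : IsSuperstandard lam n ptau) :
    ∀ k l, 1 ≤ k → k ≤ l → l ≤ n → colT ptau k ≤ colT ptau l := by
  intro k l hk hkl hln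
  induction l with
  | zero => omega
  | succ m ih =>
    rcases eq_or_lt_of_le hkl with h | h
    · rw [h]
    · have h1 : colT ptau k ≤ colT ptau m := ih (by omega) (by omega)
      have h2 : colT ptau m ≤ colT ptau (m + 1) :=
        htau.2.2 m (by omega) (by omega)
      omega

lemma step_lemma {n : ℕ} {lam : ℕ → ℕ} {ptau : ℕ → ℕ × ℕ}
    (htau : IsSuperstandard lam n ptau) {x y : ℕ → ℕ}
    (hx : IsPermOf n x) (hst : BruhatStep n x y) :
    IsPermOf n y ∧ RleP n ptau x y := by
  obtain ⟨hlen, i, j, hi, hij, hj, hy⟩ := hst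
  have hiI : i ∈ Finset.Icc 1 n := Finset.mem_Icc.mpr ⟨hi, by omega⟩
  have hjI : j ∈ Finset.Icc 1 n := Finset.mem_Icc.mpr ⟨by omega, hj⟩
  have hyperm : IsPermOf n y := permStep hx hi hij hj hy
  set a := pInv n x i with hadef
  set b := pInv n x j with hbdef
  obtain ⟨haI, hxa⟩ := pInv_spec hx hiI
  obtain ⟨hbI, hxb⟩ := pInv_spec hx hjI
  have hab : a < b := stepDir hx haI hbI hxa hxb hij hi hj hy hlen
  have hcolab : colT ptau a ≤ colT ptau b :=
    tauMono htau a b (Finset.mem_Icc.mp haI).1 (le_of_lt hab)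
      (Finset.mem_Icc.mp hbI).2
  -- pInv n y l = pInv n x (swap i j l) for l ∈ Icc
  have hpinv : ∀ l ∈ Finset.Icc 1 n, pInv n y l = pInv n x (Equiv.swap i j l) := by
    intro l hl
    have hswl : Equiv.swap i j l ∈ Finset.Icc 1 n := swap_mem hiI hjI hl
    obtain ⟨hkI, hxk⟩ := pInv_spec hx hswl
    have hyk : y (pInv n x (Equiv.swap i j l)) = l := by
      rw [hy, hxk, Equiv.swap_apply_self]
    have h5 : pInv n y (y (pInv n x (Equiv.swap i j l))) =
        pInv n x (Equiv.swap i j l) := pInv_left hyperm hkI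
    rw [hyk] at h5
    exact h5
  refine ⟨hyperm, ?_⟩
  rcases eq_or_lt_of_le hcolab with hc | hc
  · left
    intro l hl
    rw [FCol, FCol, hpinv l hl]
    rcases eq_or_ne l i with rfl | hli
    · rw [Equiv.swap_apply_left, ← hbdef, ← hadef, ← hc]
    rcases eq_or_ne l j with rfl | hlj
    · rw [Equiv.swap_apply_right, ← hadef, ← hbdef, hc]
    · rw [Equiv.swap_apply_of_ne_of_ne hli hlj]
  · right
    refine ⟨j, by omega, hj, ?_, ?_⟩
    · rw [FCol, FCol, hpinv j hjI, Equiv.swap_apply_right, ← hadef, ← hbdef]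
      exact hc
    · intro m hm1 hm2
      have hmI : m ∈ Finset.Icc 1 n := Finset.mem_Icc.mpr ⟨by omega, hm2⟩
      rw [FCol, FCol, hpinv m hmI,
        Equiv.swap_apply_of_ne_of_ne (by omega) (by omega)]

lemma chain_lemma {n : ℕ} {lam : ℕ → ℕ} {ptau : ℕ → ℕ × ℕ}
    (htau : IsSuperstandard lam n ptau) {wu wt : ℕ → ℕ}
    (hbr : BruhatLe n wu wt) (hu : IsPermOf n wu) :
    IsPermOf n wt ∧ RleP n ptau wu wt := by
  induction hbr with
  | refl => exact ⟨hu, Or.inl (fun l _ => rfl)⟩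
  | tail hab hbc ih =>
    obtain ⟨hperm, hrle⟩ := ih
    obtain ⟨hperm', hrle'⟩ := step_lemma htau hperm hbc
    exact ⟨hperm', rlep_trans hrle hrle'⟩

end Stmt9Aux
namespace Stmt9Aux

lemma row_eq_card {lam : ℕ → ℕ} {n : ℕ} {p : ℕ → ℕ × ℕ}
    (hp : IsTab lam n p) (hc : ColStd 0 n p) {l : ℕ}
    (hl : l ∈ Finset.Icc 1 n) :
    rowT p l = ((Finset.Icc 1 l).filter (fun k => colT p k = colT p l)).card := by
  obtain ⟨hbox, hinj, hsurj⟩ := hp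
  simp only [zero_add] at hbox hinj hsurj
  have hc' : ∀ k ∈ Finset.Icc 1 n, ∀ m ∈ Finset.Icc 1 n,
      colT p k = colT p m → rowT p k < rowT p m → k < m := by
    intro k hk m hm h1 h2
    exact hc k (by simpa using hk) m (by simpa using hm) h1 h2
  have hln := Finset.mem_Icc.mp hl
  symm
  rw [show rowT p l = (Finset.Icc 1 (rowT p l)).card by rw [Nat.card_Icc]; omega]
  apply Finset.card_bij (fun k _ => rowT p k)
  · -- maps to
    intro k hk
    simp only [Finset.mem_filter, Finset.mem_Icc] at hk
    obtain ⟨⟨hk1, hkl⟩, hcol⟩ := hk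
    have hkn : k ∈ Finset.Icc 1 n := Finset.mem_Icc.mpr ⟨hk1, by omega⟩
    have hrow1 := (hbox k hkn).2.1
    rw [Finset.mem_Icc]
    constructor
    · exact hrow1
    · by_contra hgt
      push_neg at hgt
      have := hc' l hl k hkn hcol.symm hgt
      omega
  · -- injective
    intro k1 hk1 k2 hk2 heq
    simp only [Finset.mem_filter, Finset.mem_Icc] at hk1 hk2
    have hk1n : k1 ∈ Finset.Icc 1 n := Finset.mem_Icc.mpr ⟨hk1.1.1, by omega⟩
    have hk2n : k2 ∈ Finset.Icc 1 n := Finset.mem_Icc.mpr ⟨hk2.1.1, by omega⟩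
    apply hinj k1 hk1n k2 hk2n
    have : colT p k1 = colT p k2 := hk1.2.trans hk2.2.symm
    exact Prod.ext heq this
  · -- surjective
    intro s hs
    rw [Finset.mem_Icc] at hs
    have hll := hbox l hl
    have hbox' : 1 ≤ (s, colT p l).2 ∧ 0 < (s, colT p l).1 ∧
        (s, colT p l).1 ≤ lam (s, colT p l).2 := by
      refine ⟨hll.1, by omega, ?_⟩
      have h1 : rowT p l ≤ lam (colT p l) := hll.2.2
      simp only
      omega
    obtain ⟨k, hkn, hpk⟩ := hsurj (s, colT p l) hbox'.1 hbox'.2.1 hbox'.2.2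
    have hcolk : colT p k = colT p l := by rw [colT, hpk]
    have hrowk : rowT p k = s := by rw [rowT, hpk]
    have hkl : k ≤ l := by
      by_contra hgt
      push_neg at hgt
      have hrs : rowT p k ≤ rowT p l := by rw [hrowk]; omega
      rcases eq_or_lt_of_le hrs with h | h
      · have : p k = p l := Prod.ext h hcolk
        have := hinj k hkn l hl this
        omega
      · have := hc' k hkn l hl hcolk h
        omega
    refine ⟨k, ?_, hrowk⟩
    simp only [Finset.mem_filter, Finset.mem_Icc]
    exact ⟨⟨(Finset.mem_Icc.mp hkn).1, hkl⟩, hcolk⟩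

end Stmt9Aux
/-- strict Bruhat comparability implies strict lexicographic
comparability for standard tableaux of the same partition shape. -/
theorem bruhat_lt_implies_lex_lt (n : ℕ) (lam : ℕ → ℕ)
    (hlam : IsPartition n lam)
    (pu pt ptau : ℕ → ℕ × ℕ)
    (hu : IsStd lam n pu) (ht : IsStd lam n pt)
    (htau : IsSuperstandard lam n ptau)
    (wu wt : ℕ → ℕ)
    (hwu : IsPermTab n ptau pu wu) (hwt : IsPermTab n ptau pt wt)
    (hbr : BruhatLe n wu wt) (hne : wu ≠ wt) :
    ∃ l, 1 ≤ l ∧ l ≤ n ∧ colT pt l < colT pu l ∧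
      ∀ m, l < m → m ≤ n → colT pt m = colT pu m := by
  classical
  obtain ⟨hwuP, hwuT⟩ := hwu
  obtain ⟨hwtP, hwtT⟩ := hwt
  obtain ⟨hwtP', hrle⟩ := Stmt9Aux.chain_lemma htau hbr hwuP
  have hpu : ∀ l ∈ Finset.Icc 1 n, pu l = ptau (Stmt9Aux.pInv n wu l) := by
    intro l hl
    obtain ⟨hkI, hk⟩ := Stmt9Aux.pInv_spec hwuP hl
    conv_lhs => rw [← hk]
    exact hwuT _ hkI
  have hpt : ∀ l ∈ Finset.Icc 1 n, pt l = ptau (Stmt9Aux.pInv n wt l) := by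
    intro l hl
    obtain ⟨hkI, hk⟩ := Stmt9Aux.pInv_spec hwtP hl
    conv_lhs => rw [← hk]
    exact hwtT _ hkI
  rcases hrle with heq | ⟨l, h1, h2, h3, h4⟩
  · -- equal column data: contradiction with wu ≠ wt
    exfalso
    have hcol : ∀ l ∈ Finset.Icc 1 n, colT pt l = colT pu l := by
      intro l hl
      have h := heq l hl
      simp only [Stmt9Aux.FCol] at h
      simp only [colT, hpt l hl, hpu l hl]
      exact h
    have hrow : ∀ l ∈ Finset.Icc 1 n, rowT pt l = rowT pu l := by
      intro l hl
      have hln := Finset.mem_Icc.mp hl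
      rw [Stmt9Aux.row_eq_card ht.1 ht.2.1 hl, Stmt9Aux.row_eq_card hu.1 hu.2.1 hl]
      congr 1
      apply Finset.filter_congr
      intro k hk
      rw [Finset.mem_Icc] at hk
      rw [hcol k (Finset.mem_Icc.mpr ⟨hk.1, le_trans hk.2 hln.2⟩), hcol l hl]
    have hagree : ∀ l ∈ Finset.Icc 1 n, pt l = pu l := fun l hl =>
      Prod.ext (hrow l hl) (hcol l hl)
    have hpuinj := hu.1.2.1
    simp only [zero_add] at hpuinj
    apply hne
    funext k
    by_cases hk : k ∈ Finset.Icc 1 n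
    · have e1 : pu (wu k) = ptau k := hwuT k hk
      have e2 : pt (wt k) = ptau k := hwtT k hk
      have e3 : pu (wt k) = ptau k := by
        rw [← hagree (wt k) (hwtP.1 k hk)]; exact e2
      exact hpuinj (wu k) (hwuP.1 k hk) (wt k) (hwtP.1 k hk) (e1.trans e3.symm)
    · rw [hwuP.2.2 k hk, hwtP.2.2 k hk]
  · -- strict case
    refine ⟨l, h1, h2, ?_, ?_⟩
    · have hl : l ∈ Finset.Icc 1 n := Finset.mem_Icc.mpr ⟨h1, h2⟩
      simp only [Stmt9Aux.FCol] at h3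
      simp only [colT, hpt l hl, hpu l hl]
      exact h3
    · intro m hm1 hm2
      have hm : m ∈ Finset.Icc 1 n := Finset.mem_Icc.mpr ⟨by omega, hm2⟩
      have h := h4 m hm1 hm2
      simp only [Stmt9Aux.FCol] at h
      simp only [colT, hpt m hm, hpu m hm]
      exact h
end

section
/- Let n ≥ 2, and let μ, λ be partitions of n, t a standard λ-tableau and u a standard μ-tableau. Suppose t is 1-minimal with respect to u, meaning: the restriction number of (u,t) is 1 (i.e., only the entry 1 occupies the same box in u and t), D(t) ⊊ D(u), the skew tableau t with entry 1 removed is 1-critical, and the empty initial segment condition is vacuous. Then μ < λ in the dominance order on partitions of n. -/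
/-!
In `t` the entries `1, 2` occupy the boxes `(1,1), (1,2)`, whereas in `u` the entry `2` lies in
column `1`, since `u` and `t` differ at `2`. Label every entry `j` by its column in `t`, except that
`2` gets the label `1`. Criticality makes the labels weakly increasing in `j`, and each plateau
`j, j+1` is a descent of `u`: directly for `j = 1`, and otherwise because it is a descent of `t`
and `D(t) ⊆ D(u)`. Hence entries with equal labels lie in strictly increasing rows of `u`, so within
each row of `u` the entries with label `≤ k` carry distinct labels, and there are at most
`μ₁ + ⋯ + μ_k` of them. They include the `λ₁ + ⋯ + λ_k` entries in the first `k` columns of `t`,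
and also the entry `2` when `k = 1`.
-/

open Finset

theorem MonotoneOn.injOn_prodMk {g r : ℕ → ℕ} {n : ℕ} (hg : MonotoneOn g (Icc 1 n))
    (hstep : ∀ j, 1 ≤ j → j + 1 ≤ n → g j = g (j + 1) → r j < r (j + 1)) :
    Set.InjOn (fun j => (g j, r j)) (Icc 1 n) := by
  have hlt : ∀ j ∈ Icc 1 n, ∀ j' ∈ Icc 1 n, j < j' → g j = g j' → r j < r j' := by
    intro j hj j' hj' hjj' hgj
    induction j', hjj' using Nat.le_induction with
    | base => exact hstep j (mem_Icc.1 hj).1 (mem_Icc.1 hj').2 hgj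
    | succ j' hjj' ih =>
      have hj'mem : j' ∈ Icc 1 n := mem_Icc.2 ⟨by omega, by have := mem_Icc.1 hj'; omega⟩
      have h1 : g j ≤ g j' := hg hj hj'mem (by omega)
      have h2 : g j' ≤ g (j' + 1) := hg hj'mem hj' (by omega)
      exact (ih hj'mem (by omega)).trans
        (hstep j' (mem_Icc.1 hj'mem).1 (mem_Icc.1 hj').2 (by omega))
  intro x hx y hy hxy
  obtain ⟨hg', hr⟩ := Prod.mk.inj hxy
  rcases lt_trichotomy x y with h | h | h
  · exact absurd hr (hlt x hx y hy h hg').ne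
  · exact h
  · exact absurd hr (hlt y hy x hx h hg'.symm).ne'

section Tableau

variable {lam : ℕ → ℕ} {n : ℕ} {p : ℕ → ℕ × ℕ}

theorem IsTab.mem (hp : IsTab lam n p) {k : ℕ} (hk : k ∈ Icc 1 n) :
    1 ≤ colT p k ∧ 0 < rowT p k ∧ rowT p k ≤ lam (colT p k) :=
  hp.1 k (by simpa using hk)

theorem IsTab.injOn (hp : IsTab lam n p) : Set.InjOn p (Icc 1 n) :=
  fun k hk l hl h => hp.2.1 k (by simpa using hk) l (by simpa using hl) h

theorem IsTab.exists_apply_eq (hp : IsTab lam n p) {r c : ℕ} (hc : 1 ≤ c) (hr : 0 < r)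
    (hrc : r ≤ lam c) : ∃ k ∈ Icc 1 n, p k = (r, c) := by
  simpa using hp.2.2 (r, c) hc hr hrc

theorem IsTab.card_filter_colT_eq (hp : IsTab lam n p) {c : ℕ} (hc : 1 ≤ c) :
    #{k ∈ Icc 1 n | colT p k = c} = lam c := by
  refine (card_nbij (t := Icc 1 (lam c)) (rowT p) (fun k hk => ?_) (fun k hk l hl h => ?_)
    (fun r hr => ?_)).trans (by simp)
  · simp only [mem_coe, mem_filter] at hk
    have := hp.mem hk.1
    simp only [coe_Icc, Set.mem_Icc]
    rw [← hk.2]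
    omega
  · simp only [mem_coe, mem_filter] at hk hl
    exact hp.injOn hk.1 hl.1 (Prod.ext h (hk.2.trans hl.2.symm))
  · simp only [coe_Icc, Set.mem_Icc] at hr
    obtain ⟨k, hk, hpk⟩ := hp.exists_apply_eq hc hr.1 hr.2
    exact ⟨k, mem_coe.2 (mem_filter.2 ⟨hk, by simp [colT, hpk]⟩), by simp [rowT, hpk]⟩

theorem IsTab.card_filter_colT_le (hp : IsTab lam n p) (c : ℕ) :
    #{k ∈ Icc 1 n | colT p k ≤ c} = psum lam c := by
  have hmaps : Set.MapsTo (colT p) ({k ∈ Icc 1 n | colT p k ≤ c} : Finset ℕ) (Icc 1 c) := by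
    intro k hk
    simp only [mem_coe, mem_filter] at hk
    simpa using ⟨(hp.mem hk.1).1, hk.2⟩
  rw [card_eq_sum_card_fiberwise hmaps, psum]
  refine sum_congr rfl fun i hi => ?_
  rw [filter_filter, ← hp.card_filter_colT_eq (mem_Icc.1 hi).1]
  exact congrArg card (filter_congr fun k _ => ⟨And.right, fun h => ⟨h ▸ (mem_Icc.1 hi).2, h⟩⟩)

theorem IsTab.le_of_le_card_row (hp : IsTab lam n p)
    (hlam : ∀ i j, 1 ≤ i → i ≤ j → lam j ≤ lam i) {A : Finset ℕ} (hA : A ⊆ Icc 1 n)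
    {r m : ℕ} (hrow : ∀ k ∈ A, rowT p k = r) (hm : 1 ≤ m) (hmA : m ≤ #A) : r ≤ lam m := by
  by_contra! hlt
  have hcol : Set.MapsTo (colT p) A (Icc 1 (m - 1)) := fun k hk => by
    have hb := hp.mem (hA hk)
    have hkm : colT p k < m := by
      by_contra! h
      have := hlam m _ hm h
      have := hrow k hk
      omega
    simp only [coe_Icc, Set.mem_Icc]
    omega
  have hinj : Set.InjOn (colT p) A := fun k hk l hl h =>
    hp.injOn (hA hk) (hA hl) (Prod.ext ((hrow k hk).trans (hrow l hl).symm) h)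
  have hcard := card_le_card_of_injOn (colT p) hcol hinj
  simp only [Nat.card_Icc] at hcard
  omega

theorem IsTab.card_le_psum (hp : IsTab lam n p) (hlam : ∀ i j, 1 ≤ i → i ≤ j → lam j ≤ lam i)
    {S : Finset ℕ} (hS : S ⊆ Icc 1 n) {g : ℕ → ℕ} {k : ℕ} (hg : Set.MapsTo g S (Icc 1 k))
    (hinj : Set.InjOn (fun j => (g j, rowT p j)) S) : #S ≤ psum lam k := by
  -- `j ↦ (rowT p j, rank of g j among the labels in its row)` injects `S` into the boxes of
  -- the first `k` columns.
  set below : ℕ → Finset ℕ := fun j => {j' ∈ S | rowT p j' = rowT p j ∧ g j' ≤ g j}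
  have mem_below : ∀ j ∈ S, j ∈ below j := fun j hj => mem_filter.2 ⟨hj, rfl, le_rfl⟩
  have below_mono : ∀ x y, rowT p x = rowT p y → g x ≤ g y → below x ⊆ below y :=
    fun x y hr hg' j hj => by
      simp only [below, mem_filter] at hj ⊢
      exact ⟨hj.1, hj.2.1.trans hr, hj.2.2.trans hg'⟩
  have card_below_le : ∀ j ∈ S, #(below j) ≤ g j := fun j hj => by
    have hmaps : Set.MapsTo g (below j) (Icc 1 (g j)) := fun x hx => by
      simp only [below, mem_coe, mem_filter] at hx
      exact mem_coe.2 (mem_Icc.2 ⟨(mem_Icc.1 (hg hx.1)).1, hx.2.2⟩)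
    have hinj' : Set.InjOn g (below j) := fun x hx y hy h => by
      simp only [below, mem_coe, mem_filter] at hx hy
      exact hinj hx.1 hy.1 (Prod.ext h (hx.2.1.trans hy.2.1.symm))
    simpa using card_le_card_of_injOn g hmaps hinj'
  have hrank : Set.MapsTo (fun j => (rowT p j, #(below j))) S
      ({j ∈ Icc 1 n | colT p j ≤ k}.image p) := fun j hj => by
    have hb := hp.mem (hS hj)
    have hrk : 1 ≤ #(below j) := card_pos.2 ⟨j, mem_below j hj⟩
    have hrow : rowT p j ≤ lam #(below j) :=
      hp.le_of_le_card_row hlam ((filter_subset _ _).trans hS)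
        (fun x hx => (mem_filter.1 hx).2.1) hrk le_rfl
    obtain ⟨e, he, hpe⟩ := hp.exists_apply_eq hrk hb.2.1 hrow
    have hce : colT p e ≤ k := by
      simpa [colT, hpe] using (card_below_le j hj).trans (mem_Icc.1 (hg hj)).2
    exact mem_coe.2 (mem_image.2 ⟨e, mem_filter.2 ⟨he, hce⟩, hpe⟩)
  have eq_of_card_below_eq : ∀ x ∈ S, ∀ y ∈ S, rowT p x = rowT p y →
      #(below x) = #(below y) → g x ≤ g y → g x = g y := fun x hx y hy hr hc hle => by
    have hxy := eq_of_subset_of_card_le (below_mono x y hr hle) hc.ge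
    have hy' := mem_below y hy
    rw [← hxy] at hy'
    exact le_antisymm hle (mem_filter.1 hy').2.2
  have hrank_inj : Set.InjOn (fun j => (rowT p j, #(below j))) S := fun x hx y hy hxy => by
    obtain ⟨hr, hc⟩ := Prod.mk.inj hxy
    have hgxy : g x = g y := (le_total (g x) (g y)).elim (eq_of_card_below_eq x hx y hy hr hc)
      fun h => (eq_of_card_below_eq y hy x hx hr.symm hc.symm h).symm
    exact hinj hx hy (Prod.ext hgxy hr)
  calc #S ≤ #({j ∈ Icc 1 n | colT p j ≤ k}.image p) := card_le_card_of_injOn _ hrank hrank_inj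
    _ = #{j ∈ Icc 1 n | colT p j ≤ k} :=
      card_image_of_injOn (hp.injOn.mono (coe_subset.2 (filter_subset _ _)))
    _ = psum lam k := hp.card_filter_colT_le k

theorem IsStd.isTab (hp : IsStd lam n p) : IsTab lam n p := hp.1

theorem IsStd.le_of_colT_eq (hp : IsStd lam n p) {k l : ℕ} (hk : k ∈ Icc 1 n) (hl : l ∈ Icc 1 n)
    (hc : colT p k = colT p l) (hr : rowT p k ≤ rowT p l) : k ≤ l := by
  rcases hr.lt_or_eq with hr | hr
  · exact (hp.2.1 k (by simpa using hk) l (by simpa using hl) hc hr).le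
  · exact (hp.isTab.injOn hk hl (Prod.ext hr hc)).le

theorem IsStd.le_of_rowT_eq (hp : IsStd lam n p) {k l : ℕ} (hk : k ∈ Icc 1 n) (hl : l ∈ Icc 1 n)
    (hr : rowT p k = rowT p l) (hc : colT p k ≤ colT p l) : k ≤ l := by
  rcases hc.lt_or_eq with hc | hc
  · exact (hp.2.2 k (by simpa using hk) l (by simpa using hl) hr hc).le
  · exact (hp.isTab.injOn hk hl (Prod.ext hr hc)).le

theorem IsStd.le_of_rowT_le_of_colT_le (hp : IsStd lam n p) {k l : ℕ} (hk : k ∈ Icc 1 n)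
    (hl : l ∈ Icc 1 n) (hr : rowT p k ≤ rowT p l) (hc : colT p k ≤ colT p l) : k ≤ l := by
  have hk' := hp.isTab.mem hk
  have hl' := hp.isTab.mem hl
  obtain ⟨e, he, hpe⟩ := hp.isTab.exists_apply_eq hl'.1 hk'.2.1 (hr.trans hl'.2.2)
  have hre : rowT p e = rowT p k := by simp [rowT, hpe]
  have hce : colT p e = colT p l := by simp [colT, hpe]
  exact (hp.le_of_rowT_eq hk he hre.symm (hce ▸ hc)).trans
    (hp.le_of_colT_eq he hl hce (hre ▸ hr))

theorem IsStd.rowT_lt_of_colT_le (hp : IsStd lam n p) {k l : ℕ} (hk : k ∈ Icc 1 n)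
    (hl : l ∈ Icc 1 n) (hkl : k < l) (hc : colT p l ≤ colT p k) : rowT p k < rowT p l := by
  by_contra hr
  exact absurd (hp.le_of_rowT_le_of_colT_le hl hk (not_lt.1 hr) hc) (not_le.2 hkl)

theorem IsStd.apply_one (hp : IsStd lam n p) (hlam : ∀ i j, 1 ≤ i → i ≤ j → lam j ≤ lam i)
    (hn : 1 ≤ n) : p 1 = (1, 1) := by
  have h1 : 1 ∈ Icc 1 n := mem_Icc.2 ⟨le_rfl, hn⟩
  have hb := hp.isTab.mem h1
  obtain ⟨e, he, hpe⟩ := hp.isTab.exists_apply_eq le_rfl one_pos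
    (hb.2.1.trans_le (hb.2.2.trans (hlam 1 _ le_rfl hb.1)))
  have he1 : e ≤ 1 := hp.le_of_rowT_le_of_colT_le he h1
    (by simp only [rowT, hpe]; exact hb.2.1) (by simp only [colT, hpe]; exact hb.1)
  rwa [le_antisymm he1 (mem_Icc.1 he).1] at hpe

theorem IsStd.apply_two_eq_or_colT_eq_one (hp : IsStd lam n p)
    (hlam : ∀ i j, 1 ≤ i → i ≤ j → lam j ≤ lam i) (hn : 2 ≤ n) :
    p 2 = (1, 2) ∨ colT p 2 = 1 := by
  have h2 : 2 ∈ Icc 1 n := mem_Icc.2 ⟨one_le_two, hn⟩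
  have hb := hp.isTab.mem h2
  refine or_iff_not_imp_right.2 fun hc => ?_
  have hc2 : 2 ≤ colT p 2 := by omega
  obtain ⟨e, he, hpe⟩ := hp.isTab.exists_apply_eq one_le_two one_pos
    (hb.2.1.trans_le (hb.2.2.trans (hlam 2 _ one_le_two hc2)))
  have he2 : e ≤ 2 := hp.le_of_rowT_le_of_colT_le he h2
    (by simp only [rowT, hpe]; exact hb.2.1) (by simp only [colT, hpe]; exact hc2)
  have he1 : e ≠ 1 := by
    rintro rfl
    simp [hp.apply_one hlam (by omega)] at hpe
  obtain rfl : e = 2 := by have := (mem_Icc.1 he).1; omega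
  exact hpe

theorem IsStd.card_filter_le_psum_of_monotoneOn (hp : IsStd lam n p)
    (hlam : ∀ i j, 1 ≤ i → i ≤ j → lam j ≤ lam i) {g : ℕ → ℕ}
    (hg : MonotoneOn g (Icc 1 n)) (hg1 : 1 ≤ g 1)
    (hdesc : ∀ j, 1 ≤ j → j + 1 ≤ n → g j = g (j + 1) → colT p (j + 1) ≤ colT p j) (k : ℕ) :
    #{j ∈ Icc 1 n | g j ≤ k} ≤ psum lam k := by
  have hrow : ∀ j, 1 ≤ j → j + 1 ≤ n → g j = g (j + 1) → rowT p j < rowT p (j + 1) :=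
    fun j hj1 hj2 h => hp.rowT_lt_of_colT_le (mem_Icc.2 ⟨hj1, by omega⟩)
      (mem_Icc.2 ⟨by omega, hj2⟩) (lt_add_one j) (hdesc j hj1 hj2 h)
  refine hp.isTab.card_le_psum hlam (filter_subset _ _) (fun j hj => ?_)
    ((hg.injOn_prodMk hrow).mono (coe_subset.2 (filter_subset _ _)))
  obtain ⟨hj, hjk⟩ := mem_filter.1 hj
  have hj1 : 1 ∈ Icc 1 n := mem_Icc.2 ⟨le_rfl, (mem_Icc.1 hj).1.trans (mem_Icc.1 hj).2⟩
  exact mem_coe.2 (mem_Icc.2 ⟨hg1.trans (hg hj1 hj (mem_Icc.1 hj).1), hjk⟩)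

theorem IsCritical.monotoneOn_update_two (hp : IsCritical lam (fun _ => 0) 0 n p)
    (hlam : ∀ i j, 1 ≤ i → i ≤ j → lam j ≤ lam i) :
    MonotoneOn (Function.update (colT p) 2 1) (Icc 1 n) := by
  have hstd : IsStd lam n p := hp.1
  rw [coe_Icc]
  refine monotoneOn_of_le_succ Set.ordConnected_Icc fun a _ ha hsa => ?_
  rw [Order.succ_eq_add_one] at hsa ⊢
  rw [Set.mem_Icc] at ha hsa
  rcases (show a = 1 ∨ a = 2 ∨ 3 ≤ a by omega) with rfl | rfl | ha3
  · simp [colT, hstd.apply_one hlam (by omega)]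
  · simpa using (hstd.isTab.mem (mem_Icc.2 hsa)).1
  · rw [Function.update_of_ne (by omega), Function.update_of_ne (by omega)]
    exact hp.2.2.2.2 a ha3 (by omega)

end Tableau

/-- if `t` is `1`-minimal with respect to `u`
then `μ < λ` in the dominance order. -/
theorem one_minimal_dominance (n : ℕ) (hn : 2 ≤ n) (mu lam : ℕ → ℕ)
    (hmu : IsPartition n mu) (hlam : IsPartition n lam)
    (pu pt : ℕ → ℕ × ℕ) (hu : IsStd mu n pu) (ht : IsStd lam n pt)
    (hres : RestNum n pu pt 1)
    (hD : Dset n pt ⊂ Dset n pu)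
    (hcrit : IsCritical lam (fun _ => 0) 0 n pt) :
    Dominates lam mu ∧ mu ≠ lam := by
  have ht1 : pt 1 = (1, 1) := ht.apply_one hlam.2 (by omega)
  have ht2 : colT pt 2 = 2 := by simpa [colT, ht1] using hcrit.2.2.2.1
  have hu1 : colT pu 1 = 1 := by simp [colT, hres.2.1 1 le_rfl le_rfl, ht1]
  have hu2 : colT pu 2 = 1 := (hu.apply_two_eq_or_colT_eq_one hmu.2 hn).resolve_left fun h =>
    hres.2.2.resolve_left (by omega) (h.trans
      ((ht.apply_two_eq_or_colT_eq_one hlam.2 hn).resolve_right (by omega)).symm)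
  set g := Function.update (colT pt) 2 1
  have hg_le : ∀ j, g j ≤ colT pt j := fun j => by
    rcases eq_or_ne j 2 with rfl | hj
    · simp [g, ht2]
    · simp [g, hj]
  have hdesc : ∀ j, 1 ≤ j → j + 1 ≤ n → g j = g (j + 1) → colT pu (j + 1) ≤ colT pu j := by
    intro j hj1 hj2 hgj
    rcases eq_or_ne j 1 with rfl | hj
    · rw [hu1, hu2]
    have hD_t : j ∈ Dset n pt := ⟨by omega, by omega, by
      simpa [g, show j + 1 ≠ 2 by omega] using hgj.symm.le.trans (hg_le j)⟩
    exact (hD.subset hD_t).2.2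
  have hcount := hu.card_filter_le_psum_of_monotoneOn hmu.2
    (hcrit.monotoneOn_update_two hlam.2) (by simp [colT, ht1]) hdesc
  have hsub : ∀ k, {j ∈ Icc 1 n | colT pt j ≤ k} ⊆ {j ∈ Icc 1 n | g j ≤ k} := fun k =>
    monotone_filter_right _ fun j _ h => (hg_le j).trans h
  refine ⟨fun k => ?_, fun hml => ?_⟩
  · rw [← ht.isTab.card_filter_colT_le]
    exact (card_le_card (hsub k)).trans (hcount k)
  · have h2 : 2 ∈ {j ∈ Icc 1 n | g j ≤ 1} :=
      mem_filter.2 ⟨mem_Icc.2 ⟨one_le_two, hn⟩, by simp [g]⟩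
    have hlt := (card_lt_card ((ssubset_iff_of_subset (hsub 1)).2
      ⟨2, h2, by simp [ht2]⟩)).trans_le (hcount 1)
    rw [ht.isTab.card_filter_colT_le, hml] at hlt
    exact lt_irrefl _ hlt
end

section
/- Let λ be a partition of n and u, t standard λ-tableaux such that (u,t) is favourable (the restriction number i of (u,t) lies in the symmetric difference D(u) ⊕ D(t)) and D(t) ⊊ D(u). Then i < max(SD(t)); in particular SD(t) is nonempty. -/
/-!
Since `D(t) ⊆ D(u)`, the restriction number `i` is a descent of `u` but an ascent of `t`:
`col_u(i+1) ≤ col_u(i) = col_t(i) < col_t(i+1)`. The box of `u` holding `i+1` is not occupied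
by an entry `≤ i` of `t`, so `t` holds some `l > i` there. If `t` had no strong descent after
`i`, its columns would weakly increase from `i+1` on, giving `col_t(l) ≥ col_t(i+1) > col_u(i+1)`,
a contradiction.
-/

theorem colT_le_colT_of_forall_not_inSD {a n k l : ℕ} {p : ℕ → ℕ × ℕ}
    (hk : a + 1 ≤ k) (hkl : k ≤ l) (hl : l ≤ a + n)
    (h : ∀ j, k ≤ j → j < l → ¬ inSD a n p j) : colT p k ≤ colT p l := by
  induction l, hkl using Nat.le_induction with
  | base => exact le_rfl
  | succ l hkl ih =>
    have hstep := h l hkl (Nat.lt_succ_self l)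
    simp only [inSD, not_and, not_lt] at hstep
    exact (ih (by omega) fun j hj hjl => h j hj (by omega)).trans (hstep (by omega) (by omega))

theorem IsTab.exists_gt_of_restrictions_agree {lam : ℕ → ℕ} {n i : ℕ} {pu pt : ℕ → ℕ × ℕ}
    (hu : IsTab lam n pu) (ht : IsTab lam n pt) (hi : i < n)
    (heq : ∀ k, 1 ≤ k → k ≤ i → pu k = pt k) :
    ∃ l, i < l ∧ l ≤ n ∧ pt l = pu (i + 1) := by
  obtain ⟨hubox, huinj, -⟩ := hu
  have hmem : i + 1 ∈ Finset.Icc (0 + 1) (0 + n) := Finset.mem_Icc.2 ⟨by omega, by omega⟩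
  obtain ⟨hcol, hrow, hlam⟩ := hubox (i + 1) hmem
  obtain ⟨l, hl, hpl⟩ := ht.2.2 (pu (i + 1)) hcol hrow hlam
  rw [Finset.mem_Icc] at hl
  refine ⟨l, ?_, by omega, hpl⟩
  by_contra! hli
  have := huinj l (Finset.mem_Icc.2 hl) (i + 1) hmem ((heq l hl.1 hli).trans hpl)
  omega

theorem exists_inSD_gt_of_favourable {lam : ℕ → ℕ} {n i : ℕ} {pu pt : ℕ → ℕ × ℕ}
    (hu : IsTab lam n pu) (ht : IsTab lam n pt) (hfav : Favourable n pu pt i)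
    (hD : Dset n pt ⊆ Dset n pu) :
    ∃ j, inSD 0 n pt j ∧ i < j := by
  obtain ⟨⟨-, heq, -⟩, hsymm⟩ := hfav
  obtain ⟨⟨hi, hin, hcu⟩, hit⟩ : inD 0 n pu i ∧ ¬ inD 0 n pt i :=
    hsymm.resolve_right fun h => h.2 (hD h.1)
  have hct : colT pt i < colT pt (i + 1) := by
    by_contra h
    exact hit ⟨hi, hin, not_lt.1 h⟩
  have hcol_i : colT pu i = colT pt i := congrArg Prod.snd (heq i hi le_rfl)
  obtain ⟨l, hil, hln, hl⟩ := hu.exists_gt_of_restrictions_agree ht (by omega) heq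
  have hcol_l : colT pt l = colT pu (i + 1) := congrArg Prod.snd hl
  by_contra! hno
  have := colT_le_colT_of_forall_not_inSD (k := i + 1) (by omega) hil (by omega)
    fun j hj _ hsd => absurd (hno j hsd) (by omega)
  omega

theorem restriction_number_lt_max_strong_descent_general (n : ℕ) (lam : ℕ → ℕ)
    (pu pt : ℕ → ℕ × ℕ) (hu : IsStd lam n pu) (ht : IsStd lam n pt)
    (i : ℕ) (hfav : Favourable n pu pt i)
    (hD : Dset n pt ⊂ Dset n pu) :
    ∃ j, inSD 0 n pt j ∧ i < j ∧ ∀ j', inSD 0 n pt j' → j' ≤ j := by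
  classical
  obtain ⟨j₀, hj₀, hij₀⟩ := exists_inSD_gt_of_favourable hu.1 ht.1 hfav hD.subset
  have hbound {j : ℕ} (hj : inSD 0 n pt j) : j ≤ n := by
    have := hj.2.1
    omega
  refine ⟨Nat.findGreatest (inSD 0 n pt) n, Nat.findGreatest_spec (hbound hj₀) hj₀,
    hij₀.trans_le (Nat.le_findGreatest (hbound hj₀) hj₀), ?_⟩
  exact fun j hj => Nat.le_findGreatest (hbound hj) hj

/-- for a favourable pair with `D(t) ⊊ D(u)` the restriction
number is strictly below the largest strong descent of `t`. -/
theorem restriction_number_lt_max_strong_descent (n : ℕ) (lam : ℕ → ℕ)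
    (hlam : IsPartition n lam)
    (pu pt : ℕ → ℕ × ℕ) (hu : IsStd lam n pu) (ht : IsStd lam n pt)
    (i : ℕ) (hfav : Favourable n pu pt i)
    (hD : Dset n pt ⊂ Dset n pu) :
    ∃ j, inSD 0 n pt j ∧ i < j ∧ ∀ j', inSD 0 n pt j' → j' ≤ j :=
  restriction_number_lt_max_strong_descent_general n lam pu pt hu ht i hfav hD
end

section
/- Let λ be a partition of n, and u, t standard λ-tableaux such that (u,t) is favourable with restriction number i and D(t) ⊊ D(u). If i + 1 = max(SD(t)), then col_t(i+2) ≠ col_t(i). -/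
/-!
Suppose `col_t(i+2) = col_t(i) = c`, with `i` in row `r`. As `i ∉ D(t)`, the entry `i+1` lies
right of column `c`; as `t` has no strong descent after `i+1`, the columns of `i+2, i+3, …`
weakly increase from `c`. Hence every entry `> i` of `t`, and so of `u` (which agrees with `t`
on `1, …, i`), lies in a column `≥ c`, and `i+2, i+3, …` fill column `c` of `t` from row `r+1`
to its bottom. Those are weak descents of `t`, hence descents of `u`; together with `i ∈ D(u)`
they push `i, i+1, …, i+1+(λ_c - r)` straight down column `c` of `u`, one entry more than fits.
-/

lemma rowT_eq_of_apply_eq {p : ℕ → ℕ × ℕ} {k r c : ℕ} (h : p k = (r, c)) : rowT p k = r := by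
  simp [rowT, h]

lemma colT_eq_of_apply_eq {p : ℕ → ℕ × ℕ} {k r c : ℕ} (h : p k = (r, c)) : colT p k = c := by
  simp [colT, h]

namespace IsStd

variable {lam : ℕ → ℕ} {n : ℕ} {p : ℕ → ℕ × ℕ}

private lemma mem_entries {k : ℕ} (h1 : 1 ≤ k) (h2 : k ≤ n) : k ∈ Finset.Icc (0+1) (0+n) :=
  Finset.mem_Icc.mpr ⟨by omega, by omega⟩

lemma one_le_colT (h : IsStd lam n p) {k : ℕ} (h1 : 1 ≤ k) (h2 : k ≤ n) : 1 ≤ colT p k :=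
  (h.1.1 k (mem_entries h1 h2)).1

lemma one_le_rowT (h : IsStd lam n p) {k : ℕ} (h1 : 1 ≤ k) (h2 : k ≤ n) : 1 ≤ rowT p k :=
  (h.1.1 k (mem_entries h1 h2)).2.1

lemma rowT_le (h : IsStd lam n p) {k : ℕ} (h1 : 1 ≤ k) (h2 : k ≤ n) :
    rowT p k ≤ lam (colT p k) :=
  (h.1.1 k (mem_entries h1 h2)).2.2

lemma exists_eq (h : IsStd lam n p) {r c : ℕ} (hc : 1 ≤ c) (hr : 1 ≤ r) (hrc : r ≤ lam c) :
    ∃ m, 1 ≤ m ∧ m ≤ n ∧ p m = (r, c) := by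
  obtain ⟨m, hm, hpm⟩ := h.1.2.2 (r, c) hc hr hrc
  rw [Finset.mem_Icc] at hm
  exact ⟨m, by omega, by omega, hpm⟩

lemma injOn (h : IsStd lam n p) {k l : ℕ} (hk1 : 1 ≤ k) (hk2 : k ≤ n) (hl1 : 1 ≤ l)
    (hl2 : l ≤ n) (he : p k = p l) : k = l :=
  h.1.2.1 k (mem_entries hk1 hk2) l (mem_entries hl1 hl2) he

lemma lt_of_rowT_lt (h : IsStd lam n p) {k l : ℕ} (hk1 : 1 ≤ k) (hk2 : k ≤ n) (hl1 : 1 ≤ l)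
    (hl2 : l ≤ n) (hcol : colT p k = colT p l) (hrow : rowT p k < rowT p l) : k < l :=
  h.2.1 k (mem_entries hk1 hk2) l (mem_entries hl1 hl2) hcol hrow

lemma rowT_lt_of_lt (h : IsStd lam n p) {k l : ℕ} (hk1 : 1 ≤ k) (hl2 : l ≤ n)
    (hcol : colT p k = colT p l) (hkl : k < l) : rowT p k < rowT p l := by
  rcases lt_trichotomy (rowT p k) (rowT p l) with hlt | heq | hgt
  · exact hlt
  · exact absurd (h.injOn hk1 (by omega) (by omega) hl2 (Prod.ext heq hcol)) hkl.ne
  · exact absurd (h.lt_of_rowT_lt (by omega) hl2 hk1 (by omega) hcol.symm hgt) hkl.not_gt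

/-- The next entry of a column after `k` is the one directly below `k`. -/
lemma rowT_eq_succ (h : IsStd lam n p) {k m : ℕ} (hk1 : 1 ≤ k) (hkm : k < m) (hm : m ≤ n)
    (hcol : colT p m = colT p k) (hgap : ∀ l, k < l → l < m → colT p l ≠ colT p k) :
    rowT p m = rowT p k + 1 := by
  have hrow := h.rowT_lt_of_lt hk1 hm hcol.symm hkm
  by_contra hne
  obtain ⟨l, hl1, hln, hpl⟩ := h.exists_eq (r := rowT p m - 1) (c := colT p m)
    (h.one_le_colT (by omega) hm) (by omega) ((Nat.sub_le _ 1).trans (h.rowT_le (by omega) hm))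
  have hcoll : colT p l = colT p m := colT_eq_of_apply_eq hpl
  have hrowl : rowT p l = rowT p m - 1 := rowT_eq_of_apply_eq hpl
  have hlm := h.lt_of_rowT_lt hl1 hln (by omega) hm hcoll (by omega)
  have hkl := h.lt_of_rowT_lt hk1 (by omega) hl1 hln (hcol.symm.trans hcoll.symm) (by omega)
  exact hgap l hkl hlm (hcoll.trans hcol)

lemma eq_succ_of_colT_succ_eq (h : IsStd lam n p) {k : ℕ} (hk1 : 1 ≤ k) (hk : k + 1 ≤ n)
    (hcol : colT p (k+1) = colT p k) : p (k+1) = (rowT p k + 1, colT p k) :=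
  Prod.ext (h.rowT_eq_succ hk1 k.lt_succ_self hk hcol fun _ hl hl' => absurd hl' (by omega)) hcol

lemma eq_add_of_monotoneOn (h : IsStd lam n p) {a : ℕ} (ha1 : 1 ≤ a) (ha : a ≤ n)
    (hmono : MonotoneOn (colT p) (Set.Icc a n)) :
    ∀ e, rowT p a + e ≤ lam (colT p a) → a + e ≤ n ∧ p (a+e) = (rowT p a + e, colT p a) := by
  intro e
  induction e with
  | zero => exact fun _ => ⟨ha, rfl⟩
  | succ e ih =>
    intro hspace
    obtain ⟨hen, hpe⟩ := ih (by omega)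
    have hcole : colT p (a+e) = colT p a := colT_eq_of_apply_eq hpe
    have hrowe : rowT p (a+e) = rowT p a + e := rowT_eq_of_apply_eq hpe
    obtain ⟨m, hm1, hmn, hpm⟩ := h.exists_eq (h.one_le_colT ha1 ha) (by omega) hspace
    have hcolm : colT p m = colT p a := colT_eq_of_apply_eq hpm
    have hem : a + e < m := h.lt_of_rowT_lt (by omega) hen hm1 hmn (hcole.trans hcolm.symm)
      (by rw [hrowe, rowT_eq_of_apply_eq hpm]; omega)
    have hmem : ∀ j, a ≤ j → j ≤ m → j ∈ Set.Icc a n := fun j h1 h2 => ⟨h1, by omega⟩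
    have hcol : colT p (a+e+1) = colT p (a+e) := le_antisymm
      (hcole ▸ hcolm ▸ hmono (hmem _ (by omega) (by omega)) (hmem _ (by omega) le_rfl) hem)
      (hmono (hmem _ (by omega) (by omega)) (hmem _ (by omega) hem) (by omega))
    refine ⟨by omega, ?_⟩
    rw [← add_assoc, h.eq_succ_of_colT_succ_eq (by omega) (by omega) hcol, hrowe, hcole]
    rfl

lemma inD_add_of_monotoneOn (h : IsStd lam n p) {a : ℕ} (ha1 : 1 ≤ a) (ha : a ≤ n)
    (hmono : MonotoneOn (colT p) (Set.Icc a n)) {e : ℕ}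
    (hspace : rowT p a + e + 1 ≤ lam (colT p a)) : inD 0 n p (a + e) := by
  obtain ⟨-, hpe⟩ := h.eq_add_of_monotoneOn ha1 ha hmono e (by omega)
  obtain ⟨hen, hpe'⟩ := h.eq_add_of_monotoneOn ha1 ha hmono (e + 1) hspace
  refine ⟨by omega, by omega, le_of_eq ?_⟩
  rw [colT_eq_of_apply_eq hpe, add_assoc, colT_eq_of_apply_eq hpe']

/-- A run of descents that cannot move left of its starting column goes straight down it. -/
lemma rowT_add_le_of_inD (h : IsStd lam n p) {a D : ℕ} (ha1 : 1 ≤ a) (ha : a ≤ n)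
    (hright : ∀ m, a < m → m ≤ n → colT p a ≤ colT p m)
    (hrun : ∀ d < D, inD 0 n p (a + d)) : rowT p a + D ≤ lam (colT p a) := by
  have hplace : ∀ d ≤ D, a + d ≤ n ∧ p (a+d) = (rowT p a + d, colT p a) := by
    intro d
    induction d with
    | zero => exact fun _ => ⟨ha, rfl⟩
    | succ d ih =>
      intro hd
      obtain ⟨hdn, hpd⟩ := ih (by omega)
      obtain ⟨-, hd1, hdesc⟩ := hrun d (by omega)
      have hcold : colT p (a+d) = colT p a := colT_eq_of_apply_eq hpd
      have hcol : colT p (a+d+1) = colT p (a+d) :=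
        le_antisymm hdesc (hcold ▸ hright _ (by omega) (by omega))
      refine ⟨by omega, ?_⟩
      rw [← add_assoc, h.eq_succ_of_colT_succ_eq (by omega) (by omega) hcol,
        rowT_eq_of_apply_eq hpd, hcold]
      rfl
  obtain ⟨hDn, hpD⟩ := hplace D le_rfl
  have := h.rowT_le (by omega) hDn
  rwa [rowT_eq_of_apply_eq hpD, colT_eq_of_apply_eq hpD] at this

end IsStd

lemma colT_monotoneOn_of_inSD_le {n b : ℕ} {p : ℕ → ℕ × ℕ}
    (hmax : ∀ j, inSD 0 n p j → j ≤ b) : MonotoneOn (colT p) (Set.Icc (b+1) n) := by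
  refine monotoneOn_of_le_succ Set.ordConnected_Icc fun j _ ⟨hbj, _⟩ ⟨_, hjn⟩ => ?_
  rw [Order.succ_eq_add_one] at hjn ⊢
  by_contra hlt
  have := hmax j ⟨by omega, by omega, by omega⟩
  omega

lemma colT_le_of_eqOn {lam : ℕ → ℕ} {n i c : ℕ} {pu pt : ℕ → ℕ × ℕ}
    (hu : IsStd lam n pu) (ht : IsStd lam n pt) (hagree : ∀ k, 1 ≤ k → k ≤ i → pu k = pt k)
    (hright : ∀ m, i < m → m ≤ n → c ≤ colT pt m) :
    ∀ m, i < m → m ≤ n → c ≤ colT pu m := by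
  intro m him hmn
  by_contra hlt
  obtain ⟨k, hk1, hkn, hpk⟩ := ht.exists_eq (hu.one_le_colT (by omega) hmn)
    (hu.one_le_rowT (by omega) hmn) (hu.rowT_le (by omega) hmn)
  have hcolk : colT pt k = colT pu m := colT_eq_of_apply_eq hpk
  have hki : k ≤ i := by
    by_contra hik
    exact hlt (hcolk ▸ hright k (by omega) hkn)
  have := hu.injOn hk1 hkn (by omega) hmn ((hagree k hk1 hki).trans hpk)
  omega

lemma Favourable.inD_of_subset {n i : ℕ} {pu pt : ℕ → ℕ × ℕ} (hfav : Favourable n pu pt i)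
    (hD : Dset n pt ⊆ Dset n pu) : inD 0 n pu i ∧ ¬ inD 0 n pt i :=
  hfav.2.resolve_right fun ⟨ht, hu⟩ => hu (hD ht)

theorem col_ne_of_favourable_max_general (n : ℕ) (lam : ℕ → ℕ)
    (pu pt : ℕ → ℕ × ℕ) (hu : IsStd lam n pu) (ht : IsStd lam n pt)
    (i : ℕ) (hfav : Favourable n pu pt i)
    (hD : Dset n pt ⊂ Dset n pu)
    (hmax : inSD 0 n pt (i+1) ∧ ∀ j, inSD 0 n pt j → j ≤ i + 1) :
    colT pt (i+2) ≠ colT pt i := by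
  intro hcol
  obtain ⟨hDu, hDt⟩ := hfav.inD_of_subset hD.subset
  have hi1 : 1 ≤ i := hDu.1
  obtain ⟨-, hi2, hsd⟩ := hmax.1
  replace hi2 : i + 2 ≤ n := by omega
  have hasc : colT pt i < colT pt (i+1) := by
    by_contra hle
    exact hDt ⟨hi1, by omega, by omega⟩
  have hmono := colT_monotoneOn_of_inSD_le hmax.2
  have hrow : rowT pt (i+2) = rowT pt i + 1 :=
    ht.rowT_eq_succ hi1 (by omega) hi2 hcol fun l hl hl' => by
      obtain rfl : l = i + 1 := by omega
      exact hasc.ne'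
  have hright : ∀ m, i < m → m ≤ n → colT pt i ≤ colT pt m := by
    intro m him hmn
    rcases (show m = i + 1 ∨ i + 2 ≤ m by omega) with rfl | hm
    · exact hasc.le
    · exact hcol ▸ hmono ⟨le_rfl, hi2⟩ ⟨hm, hmn⟩ hm
  have hrun : ∀ d < lam (colT pt i) - rowT pt i + 1, inD 0 n pu (i + d) := by
    intro d hd
    rcases (show d = 0 ∨ d = 1 ∨ 2 ≤ d by omega) with rfl | rfl | hd2
    · exact hDu
    · exact hD.subset ⟨by omega, by omega, by omega⟩
    · have := ht.inD_add_of_monotoneOn (e := d - 2) (by omega) hi2 hmono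
        (by rw [hrow, hcol]; omega)
      exact hD.subset (by rwa [show i + 2 + (d - 2) = i + d by omega] at this)
  have hpui : pu i = pt i := hfav.1.2.1 i hi1 le_rfl
  have hrowu : rowT pu i = rowT pt i := by simp only [rowT, hpui]
  have hcolu : colT pu i = colT pt i := by simp only [colT, hpui]
  have hbound := hu.rowT_add_le_of_inD hi1 (by omega)
    (hcolu ▸ colT_le_of_eqOn hu ht hfav.1.2.1 hright) hrun
  rw [hrowu, hcolu] at hbound
  have := ht.rowT_le hi1 (by omega)
  omega

/-- for a favourable pair with `D(t) ⊊ D(u)` and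
`i + 1 = max(SD(t))`, the columns of `i+2` and `i` in `t` differ. -/
theorem col_ne_of_favourable_max (n : ℕ) (lam : ℕ → ℕ)
    (hlam : IsPartition n lam)
    (pu pt : ℕ → ℕ × ℕ) (hu : IsStd lam n pu) (ht : IsStd lam n pt)
    (i : ℕ) (hfav : Favourable n pu pt i)
    (hD : Dset n pt ⊂ Dset n pu)
    (hmax : inSD 0 n pt (i+1) ∧ ∀ j, inSD 0 n pt j → j ≤ i + 1) :
    colT pt (i+2) ≠ colT pt i :=
  col_ne_of_favourable_max_general n lam pu pt hu ht i hfav hD hmax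
end

section
/- Let λ be a partition of n, 0 ≤ i ≤ n−1, and t, t' standard λ-tableaux with equal restrictions to entries > i. Let j be a strong descent of t with i < j and i an ascent of t, and set v = s_j t. Then v <_lex t'. Moreover, if i is a strong ascent of v, then s_i v is standard and s_i v <_lex t'; and if y is any standard λ-tableau with y < v in the Bruhat order, then y <_lex t'. -/
/-!
The entry `j + 1` of `v = s_j t` lies in column `col_t(j)`, strictly left of its column in `t`,
and all larger entries are where they are in `t'`; so `j + 1` witnesses `v <_lex t'`, and it
still does for `s_i v`, which only moves entries `≤ i + 1 ≤ j`.

For the Bruhat part it suffices to show `y <_lex v`. A Bruhat step `x → (a b) x` raises the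
length, so `a` precedes `b` in `x` and the filling exchanges an entry `a` lying weakly left of
`b`: the column word weakly increases. Along the chain from `y` to `v` the column word thus
weakly increases, and it cannot stay constant, since a standard tableau is determined by its
column word.
-/

open Finset in
lemma lenInv_comp_swap_lt {n k l : ℕ} {x : ℕ → ℕ} (hk : 1 ≤ k) (hkl : k < l) (hl : l ≤ n)
    (hx : x l < x k) : lenInv n (x ∘ Equiv.swap k l) < lenInv n x := by
  classical
  let inv : (ℕ → ℕ) → Finset (ℕ × ℕ) := fun w =>
    (Icc 1 n ×ˢ Icc 1 n).filter fun q => q.1 < q.2 ∧ w q.2 < w q.1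
  have mem_inv : ∀ w p q, (p, q) ∈ inv w ↔ 1 ≤ p ∧ q ≤ n ∧ p < q ∧ w q < w p := by
    intro w p q
    simp only [inv, mem_filter, mem_product, mem_Icc]
    omega
  -- Pairs meeting the open interval `(k, l)` stay inversions; the others are moved by the swap.
  let Ψ : ℕ × ℕ → ℕ × ℕ := fun q =>
    if k < q.1 ∧ q.1 < l ∨ k < q.2 ∧ q.2 < l then q
    else (Equiv.swap k l q.1, Equiv.swap k l q.2)
  have hmaps : Set.MapsTo Ψ (inv (x ∘ Equiv.swap k l)) ((inv x).erase (k, l)) := by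
    rintro ⟨p, q⟩ hpq
    simp only [mem_coe, mem_inv, Function.comp_apply, Equiv.swap_apply_def] at hpq
    simp only [Ψ, mem_coe, mem_erase]
    split_ifs
    · rw [mem_inv]
      grind
    · rw [mem_inv]
      simp only [Equiv.swap_apply_def]
      grind
  have hinj : Set.InjOn Ψ (inv (x ∘ Equiv.swap k l)) := by
    rintro ⟨p, q⟩ - ⟨p', q'⟩ - h
    simp only [Ψ] at h
    split_ifs at h with h₁ h₂ h₂
    · exact h
    · obtain ⟨rfl, rfl⟩ := Prod.mk.inj h
      simp only [Equiv.swap_apply_def] at h₁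
      split_ifs at h₁ <;> omega
    · obtain ⟨rfl, rfl⟩ := Prod.mk.inj h
      simp only [Equiv.swap_apply_def] at h₂
      split_ifs at h₂ <;> omega
    · obtain ⟨hp, hq⟩ := Prod.mk.inj h
      rw [(Equiv.swap k l).injective hp, (Equiv.swap k l).injective hq]
  calc lenInv n (x ∘ Equiv.swap k l) ≤ ((inv x).erase (k, l)).card :=
        card_le_card_of_injOn Ψ hmaps hinj
    _ < (inv x).card := card_erase_lt_of_mem ((mem_inv x k l).2 ⟨hk, hl, hkl, hx⟩)

lemma swap_mem_Icc {lo hi a b m : ℕ} (ha : a ∈ Finset.Icc lo hi) (hb : b ∈ Finset.Icc lo hi)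
    (hm : m ∈ Finset.Icc lo hi) : Equiv.swap a b m ∈ Finset.Icc lo hi := by
  rw [Equiv.swap_apply_def]
  split_ifs <;> assumption

/-- Composing with the transposition `(k k+1)` only reverses the order of the pair `k, k + 1`. -/
lemma lt_of_rel_comp_swap {R : ℕ × ℕ → ℕ × ℕ → Prop} {lo hi k : ℕ} {p : ℕ → ℕ × ℕ}
    (hp : ∀ l ∈ Finset.Icc lo hi, ∀ m ∈ Finset.Icc lo hi, R (p l) (p m) → l < m)
    (hk : lo ≤ k) (hkh : k + 1 ≤ hi) (hR : ¬ R (p k) (p (k + 1))) :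
    ∀ l ∈ Finset.Icc lo hi, ∀ m ∈ Finset.Icc lo hi,
      R (p (Equiv.swap k (k + 1) l)) (p (Equiv.swap k (k + 1) m)) → l < m := by
  intro l hl m hm hlm
  have hk₀ : k ∈ Finset.Icc lo hi := Finset.mem_Icc.2 ⟨hk, by omega⟩
  have hk₁ : k + 1 ∈ Finset.Icc lo hi := Finset.mem_Icc.2 ⟨by omega, hkh⟩
  have hσ := hp _ (swap_mem_Icc hk₀ hk₁ hl) _ (swap_mem_Icc hk₀ hk₁ hm) hlm
  by_cases hrev : l = k + 1 ∧ m = k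
  · obtain ⟨rfl, rfl⟩ := hrev
    simp only [Equiv.swap_apply_right, Equiv.swap_apply_left] at hlm
    exact absurd hlm hR
  · rw [Equiv.swap_apply_def, Equiv.swap_apply_def] at hσ
    split_ifs at hσ <;> omega

lemma IsSkewTab.comp_swap {lam mu : ℕ → ℕ} {a n b c : ℕ} {p : ℕ → ℕ × ℕ}
    (hp : IsSkewTab lam mu a n p) (hb : b ∈ Finset.Icc (a + 1) (a + n))
    (hc : c ∈ Finset.Icc (a + 1) (a + n)) : IsSkewTab lam mu a n (p ∘ Equiv.swap b c) := by
  obtain ⟨hbox, hinj, hsurj⟩ := hp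
  refine ⟨fun m hm => hbox _ (swap_mem_Icc hb hc hm), fun l hl m hm h => ?_, fun d h₁ h₂ h₃ => ?_⟩
  · exact (Equiv.swap b c).injective
      (hinj _ (swap_mem_Icc hb hc hl) _ (swap_mem_Icc hb hc hm) h)
  · obtain ⟨m, hm, rfl⟩ := hsurj d h₁ h₂ h₃
    exact ⟨Equiv.swap b c m, swap_mem_Icc hb hc hm, by simp⟩

namespace IsStdSkew

variable {lam mu : ℕ → ℕ} {a n k : ℕ} {p : ℕ → ℕ × ℕ}

lemma comp_swap (hp : IsStdSkew lam mu a n p) (hk : a + 1 ≤ k) (hkn : k + 1 ≤ a + n)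
    (hrow : rowT p k ≠ rowT p (k + 1)) (hcol : colT p k ≠ colT p (k + 1)) :
    IsStdSkew lam mu a n (p ∘ Equiv.swap k (k + 1)) := by
  obtain ⟨htab, hcs, hrs⟩ := hp
  refine ⟨htab.comp_swap (Finset.mem_Icc.2 ⟨hk, by omega⟩) (Finset.mem_Icc.2 ⟨by omega, hkn⟩),
    fun l hl m hm hc hr => ?_, fun l hl m hm hr hc => ?_⟩
  · exact lt_of_rel_comp_swap (R := fun c d => c.2 = d.2 ∧ c.1 < d.1)
      (fun l hl m hm h => hcs l hl m hm h.1 h.2) hk hkn (fun h => hcol h.1) l hl m hm ⟨hc, hr⟩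
  · exact lt_of_rel_comp_swap (R := fun c d => c.1 = d.1 ∧ c.2 < d.2)
      (fun l hl m hm h => hrs l hl m hm h.1 h.2) hk hkn (fun h => hrow h.1) l hl m hm ⟨hr, hc⟩

lemma comp_swap_of_inSD (hp : IsStdSkew lam mu a n p) (hk : inSD a n p k) :
    IsStdSkew lam mu a n (p ∘ Equiv.swap k (k + 1)) := by
  obtain ⟨hk, hkn, hcol⟩ := hk
  refine hp.comp_swap hk hkn (fun hrow => ?_) hcol.ne'
  have := hp.2.2 (k + 1) (Finset.mem_Icc.2 ⟨by omega, hkn⟩) k (Finset.mem_Icc.2 ⟨hk, by omega⟩)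
    hrow.symm hcol
  omega

lemma comp_swap_of_inSA (hp : IsStdSkew lam mu a n p) (hk : inSA a n p k) :
    IsStdSkew lam mu a n (p ∘ Equiv.swap k (k + 1)) := by
  obtain ⟨hk, hkn, hrow⟩ := hk
  refine hp.comp_swap hk hkn hrow.ne' (fun hcol => ?_)
  have := hp.2.1 (k + 1) (Finset.mem_Icc.2 ⟨by omega, hkn⟩) k (Finset.mem_Icc.2 ⟨hk, by omega⟩)
    hcol.symm hrow
  omega

end IsStdSkew

lemma mem_Icc_zero_add_iff {k n : ℕ} : k ∈ Finset.Icc (0 + 1) (0 + n) ↔ k ∈ Set.Icc 1 n := by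
  simp

namespace IsStd

variable {lam : ℕ → ℕ} {n : ℕ} {p q : ℕ → ℕ × ℕ}

lemma injOn_s14 (hp : IsStd lam n p) : Set.InjOn p (Set.Icc 1 n) :=
  fun k hk l hl h => hp.1.2.1 k (mem_Icc_zero_add_iff.2 hk) l (mem_Icc_zero_add_iff.2 hl) h

/-- If `q` had `k` lower in its column than `p`, the box of `k` in `p` would hold a smaller
entry `m` of `q`, and then `p m = q m = p k`. -/
lemma rowT_le_of_eqOn_lt (hp : IsStd lam n p) (hq : IsStd lam n q) {k : ℕ}
    (hk : k ∈ Set.Icc 1 n) (hcol : colT p k = colT q k)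
    (hbelow : ∀ m, 1 ≤ m → m < k → p m = q m) : rowT q k ≤ rowT p k := by
  by_contra! hlt
  have hkI := mem_Icc_zero_add_iff.2 hk
  obtain ⟨hcol₁, hrow₁, -⟩ := hp.1.1 k hkI
  have hrowq : rowT q k ≤ lam (colT p k) := hcol ▸ (hq.1.1 k hkI).2.2
  obtain ⟨m, hm, hqm⟩ := hq.1.2.2 (p k) hcol₁ hrow₁ (hlt.le.trans hrowq)
  have hmk : m < k := hq.2.1 m hm k hkI (by simp only [colT, hqm]; exact hcol) (by
    simpa only [rowT, hqm] using hlt)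
  have hpm : p m = p k := (hbelow m (mem_Icc_zero_add_iff.1 hm).1 hmk).trans hqm
  exact hmk.ne (hp.1.2.1 m hm k hkI hpm)

lemma eqOn_of_colT_eqOn (hp : IsStd lam n p) (hq : IsStd lam n q)
    (hcol : Set.EqOn (colT p) (colT q) (Set.Icc 1 n)) : Set.EqOn p q (Set.Icc 1 n) := by
  intro k
  induction k using Nat.strong_induction_on with
  | _ k ih =>
    intro hk
    have hbelow : ∀ m, 1 ≤ m → m < k → p m = q m :=
      fun m hm hmk => ih m hmk ⟨hm, hmk.le.trans hk.2⟩
    exact Prod.ext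
      (le_antisymm (hq.rowT_le_of_eqOn_lt hp hk (hcol hk).symm fun m h₁ h₂ => (hbelow m h₁ h₂).symm)
        (hp.rowT_le_of_eqOn_lt hq hk (hcol hk) hbelow))
      (hcol hk)

end IsStd

namespace IsPermOf

variable {n : ℕ} {w : ℕ → ℕ}

lemma injective (hw : IsPermOf n w) : Function.Injective w := by
  intro k l h
  by_cases hk : k ∈ Finset.Icc 1 n <;> by_cases hl : l ∈ Finset.Icc 1 n
  · exact hw.2.1 k hk l hl h
  · exact absurd (hw.2.2 l hl ▸ h ▸ hw.1 k hk) hl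
  · exact absurd (hw.2.2 k hk ▸ h.symm ▸ hw.1 l hl) hk
  · rwa [hw.2.2 k hk, hw.2.2 l hl] at h

lemma exists_eq (hw : IsPermOf n w) {m : ℕ} (hm : m ∈ Finset.Icc 1 n) :
    ∃ k ∈ Finset.Icc 1 n, w k = m := by
  obtain ⟨k, hk, hkm⟩ := Finset.surj_on_of_inj_on_of_card_le (fun k _ => w k) (fun k hk => hw.1 k hk)
    (fun k l hk hl h => hw.2.1 k hk l hl h) le_rfl m hm
  exact ⟨k, hk, hkm.symm⟩

lemma swap_comp (hw : IsPermOf n w) {a b : ℕ} (ha : a ∈ Finset.Icc 1 n)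
    (hb : b ∈ Finset.Icc 1 n) : IsPermOf n (Equiv.swap a b ∘ w) := by
  refine ⟨fun k hk => swap_mem_Icc ha hb (hw.1 k hk),
    fun k hk l hl h => hw.2.1 k hk l hl ((Equiv.swap a b).injective h), fun k hk => ?_⟩
  rw [Function.comp_apply, hw.2.2 k hk]
  exact Equiv.swap_apply_of_ne_of_ne (fun h => hk (h ▸ ha)) (fun h => hk (h ▸ hb))

end IsPermOf

namespace IsPermTab

variable {n : ℕ} {ptau p q : ℕ → ℕ × ℕ} {w w' : ℕ → ℕ}

lemma eqOn (hp : IsPermTab n ptau p w) (hq : IsPermTab n ptau q w) :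
    Set.EqOn p q (Set.Icc 1 n) := by
  intro m hm
  obtain ⟨k, hk, rfl⟩ := hp.1.exists_eq (Finset.mem_Icc.2 hm)
  rw [hp.2 k hk, hq.2 k hk]

lemma eq_of_eqOn (hp : IsPermTab n ptau p w) (hq : IsPermTab n ptau q w')
    (hinj : Set.InjOn p (Set.Icc 1 n)) (hpq : Set.EqOn p q (Set.Icc 1 n)) : w = w' := by
  funext k
  by_cases hk : k ∈ Finset.Icc 1 n
  · have hw'k := Finset.mem_Icc.1 (hq.1.1 k hk)
    refine hinj (Finset.mem_Icc.1 (hp.1.1 k hk)) hw'k ?_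
    rw [hp.2 k hk, hpq hw'k, hq.2 k hk]
  · rw [hp.1.2.2 k hk, hq.1.2.2 k hk]

end IsPermTab

def LexLE (n : ℕ) (p q : ℕ → ℕ × ℕ) : Prop :=
  LexLT n p q ∨ Set.EqOn (colT p) (colT q) (Set.Icc 1 n)

lemma LexLT.congr {n : ℕ} {p p' q q' : ℕ → ℕ × ℕ} (h : LexLT n p q)
    (hp : Set.EqOn (colT p) (colT p') (Set.Icc 1 n))
    (hq : Set.EqOn (colT q) (colT q') (Set.Icc 1 n)) : LexLT n p' q' := by
  obtain ⟨l, hl, hln, hlt, hagree⟩ := h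
  refine ⟨l, hl, hln, ?_, fun m hlm hmn => ?_⟩
  · rwa [← hp ⟨hl, hln⟩, ← hq ⟨hl, hln⟩]
  · rw [← hp ⟨by omega, hmn⟩, ← hq ⟨by omega, hmn⟩, hagree m hlm hmn]

lemma LexLT.trans {n : ℕ} {p q r : ℕ → ℕ × ℕ} (hpq : LexLT n p q) (hqr : LexLT n q r) :
    LexLT n p r := by
  obtain ⟨l, hl, hln, hlt, hagree⟩ := hpq
  obtain ⟨l', hl', hln', hlt', hagree'⟩ := hqr
  rcases lt_trichotomy l l' with h | rfl | h
  · exact ⟨l', hl', hln', hagree l' h hln' ▸ hlt',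
      fun m hm hmn => (hagree' m hm hmn).trans (hagree m (h.trans hm) hmn)⟩
  · exact ⟨l, hl, hln, hlt'.trans hlt,
      fun m hm hmn => (hagree' m hm hmn).trans (hagree m hm hmn)⟩
  · exact ⟨l, hl, hln, hagree' l h hln ▸ hlt,
      fun m hm hmn => (hagree' m (h.trans hm) hmn).trans (hagree m hm hmn)⟩

lemma LexLE.trans {n : ℕ} {p q r : ℕ → ℕ × ℕ} (hpq : LexLE n p q) (hqr : LexLE n q r) :
    LexLE n p r := by
  rcases hpq with hpq | hpq <;> rcases hqr with hqr | hqr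
  · exact Or.inl (hpq.trans hqr)
  · exact Or.inl (hpq.congr (fun _ _ => rfl) hqr)
  · exact Or.inl (hqr.congr hpq.symm fun _ _ => rfl)
  · exact Or.inr (hpq.trans hqr)

lemma IsSuperstandard.colT_monotoneOn {lam : ℕ → ℕ} {n : ℕ} {ptau : ℕ → ℕ × ℕ}
    (h : IsSuperstandard lam n ptau) : MonotoneOn (colT ptau) (Set.Icc 1 n) :=
  monotoneOn_of_le_succ Set.ordConnected_Icc fun k _ hk hk' => h.2.2 k hk.1 hk'.2

section Bruhat

variable {lam : ℕ → ℕ} {n : ℕ} {ptau p : ℕ → ℕ × ℕ} {x y : ℕ → ℕ}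

lemma BruhatStep.exists_isPermTab_lexLE (htau : IsSuperstandard lam n ptau)
    (hp : IsPermTab n ptau p x) (h : BruhatStep n x y) :
    ∃ q, IsPermTab n ptau q y ∧ LexLE n p q := by
  obtain ⟨hlen, a, b, ha, hab, hbn, hy⟩ := h
  have haI : a ∈ Finset.Icc 1 n := Finset.mem_Icc.2 ⟨ha, by omega⟩
  have hbI : b ∈ Finset.Icc 1 n := Finset.mem_Icc.2 ⟨by omega, hbn⟩
  obtain rfl : y = Equiv.swap a b ∘ x := funext hy
  refine ⟨p ∘ Equiv.swap a b, ⟨hp.1.swap_comp haI hbI, fun k hk => ?_⟩, ?_⟩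
  · simp [hp.2 k hk]
  obtain ⟨k, hk, rfl⟩ := hp.1.exists_eq haI
  obtain ⟨l, hl, rfl⟩ := hp.1.exists_eq hbI
  have hkl : k < l := by
    by_contra! hlk
    have hne : l ≠ k := by rintro rfl; exact hab.ne rfl
    have hyx : Equiv.swap (x k) (x l) ∘ x = x ∘ Equiv.swap l k := by
      rw [Equiv.swap_comm l k]
      funext m
      exact hp.1.injective.swap_apply k l m
    have := lenInv_comp_swap_lt (Finset.mem_Icc.1 hl).1 (lt_of_le_of_ne hlk hne)
      (Finset.mem_Icc.1 hk).2 hab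
    rw [← hyx] at this
    omega
  have hcol : colT p (x k) ≤ colT p (x l) := by
    simpa only [colT, hp.2 k hk, hp.2 l hl] using
      htau.colT_monotoneOn (Finset.mem_Icc.1 hk) (Finset.mem_Icc.1 hl) hkl.le
  rcases hcol.lt_or_eq with hlt | heq
  · refine Or.inl ⟨x l, (Finset.mem_Icc.1 hbI).1, hbn, ?_, fun m hm _ => ?_⟩
    · simpa [colT] using hlt
    · simp only [colT, Function.comp_apply]
      rw [Equiv.swap_apply_of_ne_of_ne (by omega) hm.ne']
  · refine Or.inr fun m _ => ?_
    simp only [colT, Function.comp_apply, Equiv.swap_apply_def]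
    split_ifs with h₁ h₂
    · rw [h₁]; exact heq
    · rw [h₂]; exact heq.symm
    · rfl

lemma BruhatLe.exists_isPermTab_lexLE (htau : IsSuperstandard lam n ptau)
    (hp : IsPermTab n ptau p x) (h : BruhatLe n x y) :
    ∃ q, IsPermTab n ptau q y ∧ LexLE n p q := by
  induction h with
  | refl => exact ⟨p, hp, Or.inr fun _ _ => rfl⟩
  | tail _ hstep ih =>
    obtain ⟨q, hq, hpq⟩ := ih
    obtain ⟨r, hr, hqr⟩ := hstep.exists_isPermTab_lexLE htau hq
    exact ⟨r, hr, hpq.trans hqr⟩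

theorem lexLT_of_bruhatLe {pv : ℕ → ℕ × ℕ} (htau : IsSuperstandard lam n ptau)
    (hp : IsStd lam n p) (hv : IsStd lam n pv) (hx : IsPermTab n ptau p x)
    (hy : IsPermTab n ptau pv y) (hxy : BruhatLe n x y) (hne : x ≠ y) : LexLT n p pv := by
  obtain ⟨q, hq, hpq⟩ := hxy.exists_isPermTab_lexLE htau hx
  have hqv : Set.EqOn (colT q) (colT pv) (Set.Icc 1 n) :=
    fun m hm => congrArg Prod.snd (hq.eqOn hy hm)
  rcases hpq with hlt | hcol
  · exact hlt.congr (fun _ _ => rfl) hqv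
  · exact absurd (hx.eq_of_eqOn hy hp.injOn_s14 (hp.eqOn_of_colT_eqOn hv (hcol.trans hqv))) hne

end Bruhat

lemma lexLT_of_inSD {n j : ℕ} {p pt pt' : ℕ → ℕ × ℕ} (hj : inSD 0 n pt j)
    (hres : ∀ m, j < m → m ≤ n → pt m = pt' m) (hpj : p (j + 1) = pt j)
    (hp : ∀ m, j + 1 < m → p m = pt m) : LexLT n p pt' := by
  obtain ⟨hj, hjn, hcol⟩ := hj
  refine ⟨j + 1, by omega, by omega, ?_, fun m hm hmn => ?_⟩
  · simpa only [colT, hpj, ← hres (j + 1) (by omega) (by omega)] using hcol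
  · simp only [colT, hp m hm, hres m (by omega) hmn]

theorem lex_lt_after_descent_swap_general (n : ℕ) (lam : ℕ → ℕ)
    (pt pt' pv ptau : ℕ → ℕ × ℕ)
    (ht : IsStd lam n pt)
    (htau : IsSuperstandard lam n ptau)
    (i : ℕ)
    (hres : ∀ k, i < k → k ≤ n → pt k = pt' k)
    (j : ℕ) (hjSD : inSD 0 n pt j) (hij : i < j)
    (hv : ∀ m, pv m = pt (Equiv.swap j (j+1) m)) :
    LexLT n pv pt' ∧
      (∀ psv, (∀ m, psv m = pv (Equiv.swap i (i+1) m)) → inSA 0 n pv i →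
        IsStd lam n psv ∧ LexLT n psv pt') ∧
      (∀ py wy wv, IsStd lam n py →
        IsPermTab n ptau py wy → IsPermTab n ptau pv wv →
        BruhatLe n wy wv → wy ≠ wv → LexLT n py pt') := by
  have hvstd : IsStd lam n pv := funext hv ▸ IsStdSkew.comp_swap_of_inSD ht hjSD
  have hresj : ∀ m, j < m → m ≤ n → pt m = pt' m := fun m hm => hres m (hij.trans hm)
  have hvlex : LexLT n pv pt' := lexLT_of_inSD hjSD hresj
    (by rw [hv, Equiv.swap_apply_right])
    (fun m hm => by rw [hv, Equiv.swap_apply_of_ne_of_ne (by omega) (by omega)])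
  refine ⟨hvlex, fun psv hsv hiSA => ⟨funext hsv ▸ IsStdSkew.comp_swap_of_inSA hvstd hiSA, ?_⟩,
    fun py wy wv hy hwy hwv hle hne => (lexLT_of_bruhatLe htau hy hvstd hwy hwv hle hne).trans hvlex⟩
  have hsv_eq : ∀ m, i + 1 < m → psv m = pv m :=
    fun m hm => by rw [hsv, Equiv.swap_apply_of_ne_of_ne (by omega) (by omega)]
  exact lexLT_of_inSD hjSD hresj
    (by rw [hsv_eq (j + 1) (by omega), hv, Equiv.swap_apply_right])
    (fun m hm => by rw [hsv_eq m (by omega), hv, Equiv.swap_apply_of_ne_of_ne (by omega) (by omega)])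

/-- lexicographic bounds after swapping at a strong descent. -/
theorem lex_lt_after_descent_swap (n : ℕ) (lam : ℕ → ℕ)
    (hlam : IsPartition n lam)
    (pt pt' pv ptau : ℕ → ℕ × ℕ)
    (ht : IsStd lam n pt) (ht' : IsStd lam n pt')
    (htau : IsSuperstandard lam n ptau)
    (i : ℕ) (hi : i < n)
    (hres : ∀ k, i < k → k ≤ n → pt k = pt' k)
    (j : ℕ) (hjSD : inSD 0 n pt j) (hij : i < j) (hiA : inA 0 n pt i)
    (hv : ∀ m, pv m = pt (Equiv.swap j (j+1) m)) :
    LexLT n pv pt' ∧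
      (∀ psv, (∀ m, psv m = pv (Equiv.swap i (i+1) m)) → inSA 0 n pv i →
        IsStd lam n psv ∧ LexLT n psv pt') ∧
      (∀ py wy wv, IsStd lam n py →
        IsPermTab n ptau py wy → IsPermTab n ptau pv wv →
        BruhatLe n wy wv → wy ≠ wv → LexLT n py pt') :=
  lex_lt_after_descent_swap_general n lam pt pt' pv ptau ht htau i hres j hjSD hij hv
end

section
/- Let λ/μ be a skew partition of n with i minimal such that λ_i > μ_i, and suppose λ_{i+1} > μ_{i+1}. Let m ∈ ℤ, let t be a standard skew tableau of shape λ/μ with target [m, m+n−1], and suppose col_t(m+1) = col_t(m) + 1. Then t is the m-critical tableau of shape λ/μ if and only if (1) either col_t(m) = col_t(m+2) or m+1 ∉ SD(t), and (2) every descent j of t with j > m+1 is a weak descent of t. -/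
/-! With `col(m+1) = col(m) + 1`, condition (1) says exactly that `col(m) ≤ col(m+2)`
(when `m+2` is an entry) and condition (2) that the columns weakly increase from `m+2` on.
Together they say that every entry lies in column `col(m)` or to its right, which is the
same as `col(m)` being the first nonempty column of the skew diagram. -/

namespace IsSkewTab

variable {lam mu : ℕ → ℕ} {a n : ℕ} {p : ℕ → ℕ × ℕ}

theorem lt_colT (h : IsSkewTab lam mu a n p) {k : ℕ} (hk : k ∈ Finset.Icc (a+1) (a+n)) :
    mu (colT p k) < lam (colT p k) :=
  (h.1 k hk).2.1.trans_le (h.1 k hk).2.2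

theorem exists_colT_eq (h : IsSkewTab lam mu a n p) {j : ℕ} (hj : 1 ≤ j) (hlt : mu j < lam j) :
    ∃ k ∈ Finset.Icc (a+1) (a+n), colT p k = j := by
  obtain ⟨k, hk, hpk⟩ := h.2.2 (mu j + 1, j) hj (Nat.lt_succ_self _) hlt
  exact ⟨k, hk, by rw [colT, hpk]⟩

theorem pos_of_lt (h : IsSkewTab lam mu a n p) {j : ℕ} (hj : 1 ≤ j) (hlt : mu j < lam j) :
    0 < n := by
  obtain ⟨k, hk, -⟩ := h.exists_colT_eq hj hlt
  simp only [Finset.mem_Icc] at hk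
  omega

theorem forall_lt_le_iff_le_colT (h : IsSkewTab lam mu a n p) (c : ℕ) :
    (∀ j, 1 ≤ j → j < c → lam j ≤ mu j) ↔ ∀ k ∈ Finset.Icc (a+1) (a+n), c ≤ colT p k := by
  refine ⟨fun hempty k hk => ?_, fun hcol j hj hjc => ?_⟩
  · by_contra! hlt
    exact (h.lt_colT hk).not_ge (hempty _ (h.1 k hk).1 hlt)
  · by_contra! hlt
    obtain ⟨k, hk, rfl⟩ := h.exists_colT_eq hj hlt
    exact hjc.not_ge (hcol k hk)

end IsSkewTab

theorem inD_imp_inWD_iff {a n : ℕ} {p : ℕ → ℕ × ℕ} {j : ℕ} :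
    (inD a n p j → inWD a n p j) ↔ (a + 1 ≤ j → j + 1 ≤ a + n → colT p j ≤ colT p (j+1)) := by
  unfold inD inWD
  omega

theorem colT_le_of_le_succ {n b : ℕ} {p : ℕ → ℕ × ℕ}
    (hmono : ∀ k, b ≤ k → k + 1 ≤ n → colT p k ≤ colT p (k+1)) {k : ℕ} (hbk : b ≤ k) (hkn : k ≤ n) :
    colT p b ≤ colT p k :=
  monotoneOn_of_le_succ (s := Set.Icc b n) Set.ordConnected_Icc
    (fun k _ hk hk1 => by
      simp only [Order.succ_eq_add_one, Set.mem_Icc] at hk hk1 ⊢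
      exact hmono k hk.1 hk1.2)
    ⟨le_rfl, hbk.trans hkn⟩ ⟨hbk, hkn⟩ hbk

theorem critical_iff_general (n a : ℕ) (lam mu : ℕ → ℕ)
    (i : ℕ) (hi1 : 1 ≤ i)
    (hii : mu i < lam i)
    (pt : ℕ → ℕ × ℕ) (ht : IsStdSkew lam mu a n pt)
    (hcol : colT pt (a+2) = colT pt (a+1) + 1) :
    IsCritical lam mu a n pt ↔
      ((colT pt (a+1) = colT pt (a+3) ∨ ¬ inSD a n pt (a+2)) ∧
        ∀ jj, a + 2 < jj → inD a n pt jj → inWD a n pt jj) := by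
  have hfirst : (colT pt (a+1) = colT pt (a+3) ∨ ¬ inSD a n pt (a+2)) ↔
      (a + 3 ≤ a + n → colT pt (a+1) ≤ colT pt (a+3)) := by
    rw [inSD, show a + 2 + 1 = a + 3 from rfl]
    omega
  have hdesc : (∀ jj, a + 2 < jj → inD a n pt jj → inWD a n pt jj) ↔
      ∀ k, a + 3 ≤ k → k + 1 ≤ a + n → colT pt k ≤ colT pt (k+1) := by
    simp only [inD_imp_inWD_iff]
    exact forall_congr' fun k => ⟨fun h hk => h (by omega) (by omega), fun h hk _ => h (by omega)⟩
  have hmem : a + 1 ∈ Finset.Icc (a+1) (a+n) := by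
    have := ht.1.pos_of_lt hi1 hii
    simp only [Finset.mem_Icc]
    omega
  rw [hfirst, hdesc, IsCritical, ht.1.forall_lt_le_iff_le_colT]
  constructor
  · rintro ⟨-, hleft, -, -, hmono⟩
    exact ⟨fun h3 => hleft _ (by simp only [Finset.mem_Icc]; omega), hmono⟩
  · rintro ⟨h3, hmono⟩
    refine ⟨ht, fun k hk => ?_, ht.1.lt_colT hmem, hcol, hmono⟩
    simp only [Finset.mem_Icc] at hk
    obtain rfl | rfl | h3k : k = a + 1 ∨ k = a + 2 ∨ a + 3 ≤ k := by omega
    · exact le_rfl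
    · omega
    · exact (h3 (by omega)).trans (colT_le_of_le_succ hmono h3k hk.2)

/-- characterisation of the `m`-critical tableau (here entries
are `m, …, m+n-1` with `m = a+1`): given `col_t(m+1) = col_t(m) + 1`, the
tableau is `m`-critical iff (1) `col_t(m) = col_t(m+2)` or `m+1 ∉ SD(t)`, and
(2) every descent `j > m+1` is a weak descent. -/
theorem critical_iff (n a : ℕ) (lam mu : ℕ → ℕ)
    (hskew : IsSkewShape n lam mu)
    (i : ℕ) (hi1 : 1 ≤ i) (himin : ∀ j, 1 ≤ j → j < i → lam j ≤ mu j)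
    (hii : mu i < lam i) (hii1 : mu (i+1) < lam (i+1))
    (pt : ℕ → ℕ × ℕ) (ht : IsStdSkew lam mu a n pt)
    (hcol : colT pt (a+2) = colT pt (a+1) + 1) :
    IsCritical lam mu a n pt ↔
      ((colT pt (a+1) = colT pt (a+3) ∨ ¬ inSD a n pt (a+2)) ∧
        ∀ jj, a + 2 < jj → inD a n pt jj → inWD a n pt jj) :=
  critical_iff_general n a lam mu i hi1 hii pt ht hcol
end

section
/- Let λ be a partition of n and t a standard skew tableau with target [m+1, m+n]. Then t equals the minimal tableau m + τ_{λ/μ} of its shape if and only if t has no strong descents, i.e., D(t) = WD(t). -/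
/-!
Order the boxes of `λ/μ` column by column, each column from top to bottom.  In this
column-major order the entry of `τ_{λ/μ}` is `1` in the first box and grows by one from each
box to the next, and a box in an earlier column carries a smaller entry; so `m + τ_{λ/μ}` has
no strong descents.  Conversely, without strong descents the column of `k` weakly increases
with `k`, which together with column strictness makes `k ↦ t(k)` strictly increasing for the
column-major order.  Hence `t` puts `m + 1` into the first box and `k + 1` into the box
following that of `k`, so `t = m + τ_{λ/μ}`.
-/

def tauEntry (lam mu : ℕ → ℕ) (b : ℕ × ℕ) : ℕ :=
  (b.1 - mu b.2) + ∑ h ∈ Finset.Ico 1 b.2, (lam h - mu h)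

def InSkewDiagram (lam mu : ℕ → ℕ) (b : ℕ × ℕ) : Prop :=
  1 ≤ b.2 ∧ mu b.2 < b.1 ∧ b.1 ≤ lam b.2

def colMajor (b : ℕ × ℕ) : ℕ ×ₗ ℕ := toLex (b.2, b.1)

lemma colMajor_lt_colMajor {b b' : ℕ × ℕ} :
    colMajor b < colMajor b' ↔ b.2 < b'.2 ∨ b.2 = b'.2 ∧ b.1 < b'.1 :=
  Prod.Lex.toLex_lt_toLex

lemma colMajor_lt_of_col_lt {r r' c c' : ℕ} (h : c < c') : colMajor (r, c) < colMajor (r', c') :=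
  colMajor_lt_colMajor.2 (.inl h)

lemma colMajor_lt_of_row_lt {r r' c : ℕ} (h : r < r') : colMajor (r, c) < colMajor (r', c) :=
  colMajor_lt_colMajor.2 (.inr ⟨rfl, h⟩)

section Diagram

variable {lam mu : ℕ → ℕ} {b b' : ℕ × ℕ}

lemma inSkewDiagram_mk {r c : ℕ} (hc : 1 ≤ c) (hmu : mu c < r) (hlam : r ≤ lam c) :
    InSkewDiagram lam mu (r, c) :=
  ⟨hc, hmu, hlam⟩

lemma tauEntry_lt_of_col_lt (hb : InSkewDiagram lam mu b) (hb' : mu b'.2 < b'.1)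
    (hlt : b.2 < b'.2) : tauEntry lam mu b < tauEntry lam mu b' := by
  obtain ⟨r, c⟩ := b
  obtain ⟨r', c'⟩ := b'
  dsimp only [InSkewDiagram, tauEntry] at hb hb' hlt ⊢
  obtain ⟨hc, -, hr⟩ := hb
  calc (r - mu c) + ∑ h ∈ Finset.Ico 1 c, (lam h - mu h)
      ≤ ∑ h ∈ Finset.Ico 1 (c + 1), (lam h - mu h) := by
        rw [Finset.sum_Ico_succ_top hc]
        omega
    _ ≤ ∑ h ∈ Finset.Ico 1 c', (lam h - mu h) :=
        Finset.sum_le_sum_of_subset (Finset.Ico_subset_Ico le_rfl hlt)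
    _ < (r' - mu c') + ∑ h ∈ Finset.Ico 1 c', (lam h - mu h) := by omega

lemma tauEntry_eq_one_of_no_box_before (hb : InSkewDiagram lam mu b)
    (hmin : ∀ b', InSkewDiagram lam mu b' → ¬ colMajor b' < colMajor b) :
    tauEntry lam mu b = 1 := by
  obtain ⟨r, c⟩ := b
  dsimp only [InSkewDiagram, tauEntry] at hb ⊢
  obtain ⟨hc, hr, hrc⟩ := hb
  have htop : r = mu c + 1 := by
    by_contra h
    exact hmin (r - 1, c) (inSkewDiagram_mk hc (by omega) (by omega))
      (colMajor_lt_of_row_lt (by omega))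
  have hempty : ∑ h ∈ Finset.Ico 1 c, (lam h - mu h) = 0 := by
    refine Finset.sum_eq_zero fun h hh => Nat.sub_eq_zero_of_le (not_lt.1 fun hlt => ?_)
    rw [Finset.mem_Ico] at hh
    exact hmin (mu h + 1, h) (inSkewDiagram_mk hh.1 (Nat.lt_succ_self _) hlt)
      (colMajor_lt_of_col_lt hh.2)
  rw [hempty]
  omega

lemma tauEntry_eq_succ_of_no_box_between (hb : InSkewDiagram lam mu b)
    (hb' : InSkewDiagram lam mu b') (hlt : colMajor b < colMajor b')
    (hgap : ∀ b'', InSkewDiagram lam mu b'' →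
      colMajor b < colMajor b'' → ¬ colMajor b'' < colMajor b') :
    tauEntry lam mu b' = tauEntry lam mu b + 1 := by
  obtain ⟨r, c⟩ := b
  obtain ⟨r', c'⟩ := b'
  dsimp only [InSkewDiagram, tauEntry] at hb hb' ⊢
  obtain ⟨hc, hr, hrc⟩ := hb
  obtain ⟨hc', hr', hrc'⟩ := hb'
  rcases colMajor_lt_colMajor.1 hlt with hcc | ⟨hcc, hrr⟩
  · have hbottom : r = lam c := by
      by_contra h
      exact hgap (r + 1, c) (inSkewDiagram_mk hc (by omega) (by omega))
        (colMajor_lt_of_row_lt (Nat.lt_succ_self r))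
        (colMajor_lt_of_col_lt hcc)
    have htop : r' = mu c' + 1 := by
      by_contra h
      exact hgap (r' - 1, c') (inSkewDiagram_mk hc' (by omega) (by omega))
        (colMajor_lt_of_col_lt hcc)
        (colMajor_lt_of_row_lt (by omega))
    have hempty : ∑ h ∈ Finset.Ico (c + 1) c', (lam h - mu h) = 0 := by
      refine Finset.sum_eq_zero fun h hh => Nat.sub_eq_zero_of_le (not_lt.1 fun hlt => ?_)
      rw [Finset.mem_Ico] at hh
      exact hgap (mu h + 1, h) (inSkewDiagram_mk (by omega) (Nat.lt_succ_self _) hlt)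
        (colMajor_lt_of_col_lt (by omega))
        (colMajor_lt_of_col_lt hh.2)
    rw [← Finset.sum_Ico_consecutive _ (by omega : 1 ≤ c + 1) hcc,
      Finset.sum_Ico_succ_top hc, hempty]
    omega
  · dsimp only at hcc hrr
    subst hcc
    have hnext : r' = r + 1 := by
      by_contra h
      exact hgap (r + 1, c) (inSkewDiagram_mk hc (by omega) (by omega))
        (colMajor_lt_of_row_lt (Nat.lt_succ_self r))
        (colMajor_lt_of_row_lt (by omega))
    omega

end Diagram

section Tableau

variable {lam mu : ℕ → ℕ} {a n : ℕ} {p : ℕ → ℕ × ℕ}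

lemma colT_monotoneOn_of_no_strong_descent (hsd : ∀ i, ¬ inSD a n p i) :
    MonotoneOn (colT p) (Set.Icc (a + 1) (a + n)) :=
  monotoneOn_of_le_succ Set.ordConnected_Icc fun i _ hi hi1 => by
    rw [Order.succ_eq_add_one] at hi1 ⊢
    exact not_lt.1 fun h => hsd i ⟨hi.1, hi1.2, h⟩

lemma colMajor_strictMonoOn_of_no_strong_descent (hp : IsSkewTab lam mu a n p)
    (hcol : ColStd a n p) (hsd : ∀ i, ¬ inSD a n p i) :
    StrictMonoOn (fun k => colMajor (p k)) (Set.Icc (a + 1) (a + n)) := by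
  intro l hl k hk hlk
  rw [colMajor_lt_colMajor]
  rcases (colT_monotoneOn_of_no_strong_descent hsd hl hk hlk.le).lt_or_eq with hc | hc
  · exact .inl hc
  · refine .inr ⟨hc, ?_⟩
    rcases lt_trichotomy (p l).1 (p k).1 with h | h | h
    · exact h
    · exact absurd (hp.2.1 l (Finset.mem_Icc.2 hl) k (Finset.mem_Icc.2 hk) (Prod.ext h hc))
        hlk.ne
    · exact absurd (hcol k (Finset.mem_Icc.2 hk) l (Finset.mem_Icc.2 hl) hc.symm h)
        (not_lt.2 hlk.le)

lemma eq_add_tauEntry_of_no_strong_descent (hp : IsSkewTab lam mu a n p)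
    (hcol : ColStd a n p) (hsd : ∀ i, ¬ inSD a n p i) :
    ∀ k ∈ Finset.Icc (a + 1) (a + n), k = a + tauEntry lam mu (p k) := by
  have hmono := colMajor_strictMonoOn_of_no_strong_descent hp hcol hsd
  have hfill : ∀ b, InSkewDiagram lam mu b → ∃ l ∈ Set.Icc (a + 1) (a + n), p l = b :=
    fun b hb => by simpa only [Finset.mem_Icc, Set.mem_Icc] using hp.2.2 b hb.1 hb.2.1 hb.2.2
  intro k hk
  obtain ⟨hk1, hk2⟩ := Finset.mem_Icc.1 hk
  induction k, hk1 using Nat.le_induction with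
  | base =>
    have hfirst := tauEntry_eq_one_of_no_box_before (hp.1 _ hk) fun b hb hlt => by
      obtain ⟨l, hl, rfl⟩ := hfill b hb
      exact absurd ((hmono.lt_iff_lt hl ⟨le_rfl, hk2⟩).1 hlt) (not_lt.2 hl.1)
    omega
  | succ k hk1 ih =>
    have hk : k ∈ Set.Icc (a + 1) (a + n) := ⟨hk1, by omega⟩
    have hk' : k + 1 ∈ Set.Icc (a + 1) (a + n) := ⟨by omega, hk2⟩
    rw [tauEntry_eq_succ_of_no_box_between (hp.1 k (Finset.mem_Icc.2 hk))
      (hp.1 (k + 1) (Finset.mem_Icc.2 hk')) (hmono hk hk' k.lt_succ_self)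
      fun b hb hkb hbk => ?_, ← add_assoc, ← ih (Finset.mem_Icc.2 hk) (by omega)]
    obtain ⟨l, hl, rfl⟩ := hfill b hb
    have := (hmono.lt_iff_lt hk hl).1 hkb
    have := (hmono.lt_iff_lt hl hk').1 hbk
    omega

end Tableau

theorem minimal_iff_no_strong_descent_general (n m : ℕ) (lam mu : ℕ → ℕ)
    (pt : ℕ → ℕ × ℕ) (ht : IsStdSkew lam mu m n pt) :
    (∀ k ∈ Finset.Icc (m+1) (m+n),
        k = m + (rowT pt k - mu (colT pt k)) +
          ∑ h ∈ Finset.Ico 1 (colT pt k), (lam h - mu h)) ↔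
      ∀ i, ¬ inSD m n pt i := by
  obtain ⟨hp, hcol, -⟩ := ht
  have hτ : ∀ k, m + (rowT pt k - mu (colT pt k)) +
      ∑ h ∈ Finset.Ico 1 (colT pt k), (lam h - mu h) = m + tauEntry lam mu (pt k) :=
    fun k => add_assoc _ _ _
  simp only [hτ]
  refine ⟨fun hmin i ⟨hi, hi1, hlt⟩ => ?_, eq_add_tauEntry_of_no_strong_descent hp hcol⟩
  have hi' : i ∈ Finset.Icc (m + 1) (m + n) := Finset.mem_Icc.2 ⟨hi, by omega⟩
  have hi1' : i + 1 ∈ Finset.Icc (m + 1) (m + n) := Finset.mem_Icc.2 ⟨by omega, hi1⟩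
  have := tauEntry_lt_of_col_lt (hp.1 (i + 1) hi1') (hp.1 i hi').2.1 hlt
  have := hmin i hi'
  have := hmin (i + 1) hi1'
  omega

/-- a standard skew tableau with entries `m+1, …, m+n` is the
minimal tableau `m + τ_{lam/mu}` of its shape iff it has no strong descents. -/
theorem minimal_iff_no_strong_descent (n m : ℕ) (lam mu : ℕ → ℕ)
    (hskew : IsSkewShape n lam mu)
    (pt : ℕ → ℕ × ℕ) (ht : IsStdSkew lam mu m n pt) :
    (∀ k ∈ Finset.Icc (m+1) (m+n),
        k = m + (rowT pt k - mu (colT pt k)) +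
          ∑ h ∈ Finset.Ico 1 (colT pt k), (lam h - mu h)) ↔
      ∀ i, ¬ inSD m n pt i :=
  minimal_iff_no_strong_descent_general n m lam mu pt ht
end
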